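/- arXiv:2412.13499 — 11 statements merged into one kernel-verified Lean document; each statement's English description precedes it below -/
import Mathlib

section
/- Let u be a nonprincipal ultrafilter on ℕ, let n ≥ 1 be a natural number, and let A ∈ u. Then FS_n(A) ∈ u^n, where u^n denotes the n-fold sum u + ⋯ + u in the semigroup of ultrafilters on ℕ. -/
open Filter

attribute [local instance] Ultrafilter.add Ultrafilter.addSemigroup

/-- `sumPow u n` is the `n`-fold sum `u + ⋯ + u` of the ultrafilter `u`, for `n ≥ 1`
(with junk value `u` at `n = 0`). -/
def sumPow (u : Ultrafilter ℕ) : ℕ → Ultrafilter ℕ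
  | 0 => u
  | 1 => u
  | n + 2 => sumPow u (n + 1) + u

/-- `FSn n A` is the set of sums of `n` distinct elements of `A`. -/
def FSn (n : ℕ) (A : Set ℕ) : Set ℕ :=
  {s | ∃ a : Fin n → ℕ, Function.Injective a ∧ (∀ i, a i ∈ A) ∧ s = ∑ i, a i}

theorem aux_statement0 (u : Ultrafilter ℕ) (hu : ∀ k : ℕ, u ≠ pure k)
    (n : ℕ) (hn : 1 ≤ n) (A : Set ℕ) (hA : A ∈ u) (F : Set ℕ) (hF : F.Finite) :
    {s | ∃ a : Fin n → ℕ, Function.Injective a ∧ (∀ i, a i ∈ A ∧ a i ∉ F) ∧ s = ∑ i, a i}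
      ∈ sumPow u n := by
  have hcof : ∀ G : Set ℕ, G.Finite → Gᶜ ∈ u := by
    intro G hG
    by_contra h
    have hG' : G ∈ u := not_not.mp fun h2 => h (Ultrafilter.compl_mem_iff_notMem.mpr h2)
    obtain ⟨x, -, hx⟩ := Ultrafilter.eq_pure_of_finite_mem hG hG'
    exact hu x hx
  induction n with
  | zero => omega
  | succ n ih =>
    rcases Nat.eq_or_lt_of_le hn with h1 | h1
    · -- n + 1 = 1
      have hn0 : n = 0 := by omega
      subst hn0
      have : A ∩ Fᶜ ∈ u := inter_mem hA (hcof F hF)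
      apply u.toFilter.mem_of_superset this
      rintro x ⟨hxA, hxF⟩
      exact ⟨fun _ => x, fun i j _ => Subsingleton.elim (α := Fin 1) i j,
        fun i => ⟨hxA, hxF⟩, by simp⟩
    · have hn1 : 1 ≤ n := by omega
      have key := ih hn1
      -- sumPow u (n+1) = sumPow u n + u since n ≥ 1
      have hsp : sumPow u (n + 1) = sumPow u n + u := by
        obtain ⟨m, rfl⟩ : ∃ m, n = m + 1 := ⟨n - 1, by omega⟩
        rfl
      rw [hsp]
      refine (Ultrafilter.eventually_add (sumPow u n) u (· ∈ {s | ∃ a : Fin (n+1) → ℕ,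
        Function.Injective a ∧ (∀ i, a i ∈ A ∧ a i ∉ F) ∧ s = ∑ i, a i})).mpr ?_
      refine Eventually.mono key ?_
      rintro s ⟨a, hinj, hmem, rfl⟩
      have : A ∩ (F ∪ Set.range a)ᶜ ∈ u :=
        inter_mem hA (hcof _ (hF.union (Set.finite_range a)))
      apply Eventually.mono this
      rintro m' ⟨hm'A, hm'c⟩
      simp only [Set.mem_compl_iff, Set.mem_union, not_or, Set.mem_range, not_exists] at hm'c
      refine ⟨Fin.snoc a m', ?_, ?_, ?_⟩
      · intro i j hij
        induction i using Fin.lastCases with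
        | last =>
          induction j using Fin.lastCases with
          | last => rfl
          | cast k =>
            rw [Fin.snoc_last, Fin.snoc_castSucc] at hij
            exact absurd hij.symm (hm'c.2 k)
        | cast k =>
          induction j using Fin.lastCases with
          | last =>
            rw [Fin.snoc_last, Fin.snoc_castSucc] at hij
            exact absurd hij (hm'c.2 k)
          | cast l =>
            rw [Fin.snoc_castSucc, Fin.snoc_castSucc] at hij
            exact congrArg Fin.castSucc (hinj hij)
      · intro i
        refine Fin.lastCases ?_ ?_ i
        · rw [Fin.snoc_last]
          exact ⟨hm'A, hm'c.1⟩
        · intro k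
          rw [Fin.snoc_castSucc]
          exact ⟨(hmem k).1, (hmem k).2⟩
      · rw [Fin.sum_univ_castSucc]
        simp [Fin.snoc_castSucc, Fin.snoc_last]

/-- If `u` is a nonprincipal ultrafilter on `ℕ`, `n ≥ 1` and `A ∈ u`,
then `FS_n(A) ∈ u^n`. -/
theorem statement0 (u : Ultrafilter ℕ) (hu : ∀ k : ℕ, u ≠ pure k)
    (n : ℕ) (hn : 1 ≤ n) (A : Set ℕ) (hA : A ∈ u) :
    FSn n A ∈ sumPow u n := by
  have := aux_statement0 u hu n hn A hA ∅ Set.finite_empty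
  apply (sumPow u n).toFilter.mem_of_superset this
  rintro s ⟨a, hinj, hmem, rfl⟩
  exact ⟨a, hinj, fun i => (hmem i).1, rfl⟩
end

section
/- Let u be a nonprincipal ultrafilter on ℕ such that some A ∈ u has uniqueness of sums. Then u generates a free subsemigroup, i.e., for all natural numbers n, m ≥ 1, u^n = u^m implies n = m. -/
open Filter

attribute [local instance] Ultrafilter.add Ultrafilter.addSemigroup

/-- `A` has uniqueness of sums: two nonempty finite subsets of `A` with the same sum are equal. -/
def UniquenessOfSums (A : Set ℕ) : Prop :=
  ∀ F G : Finset ℕ, ↑F ⊆ A → ↑G ⊆ A → F.Nonempty → G.Nonempty →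
    (∑ i ∈ F, i) = ∑ i ∈ G, i → F = G

/-- Sums of `n`-element subsets of `A`. -/
def sumSet (A : Set ℕ) (n : ℕ) : Set ℕ :=
  {x | ∃ F : Finset ℕ, ↑F ⊆ A ∧ F.card = n ∧ (∑ i ∈ F, i) = x}

lemma sumPow_succ (u : Ultrafilter ℕ) {n : ℕ} (hn : 1 ≤ n) :
    sumPow u (n + 1) = sumPow u n + u := by
  cases n with
  | zero => omega
  | succ k => rfl

lemma cofinite_mem (u : Ultrafilter ℕ) (hu : ∀ k : ℕ, u ≠ pure k)
    {s : Set ℕ} (hs : s.Finite) : sᶜ ∈ u := by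
  rw [Ultrafilter.compl_mem_iff_notMem]
  intro h
  obtain ⟨x, -, hx⟩ := Ultrafilter.eq_pure_of_finite_mem hs h
  exact hu x hx

lemma sumSet_mem (u : Ultrafilter ℕ) (hu : ∀ k : ℕ, u ≠ pure k)
    (A : Set ℕ) (hAu : A ∈ u) :
    ∀ n : ℕ, 1 ≤ n → sumSet A n ∈ sumPow u n := by
  intro n hn
  induction n, hn using Nat.le_induction with
  | base =>
    have : A ⊆ sumSet A 1 := by
      intro x hx
      exact ⟨{x}, by simpa using hx, by simp, by simp⟩
    exact u.1.mem_of_superset hAu this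
  | succ n hn ih =>
    rw [sumPow_succ u hn]
    have : ∀ a ∈ sumSet A n, {b | a + b ∈ sumSet A (n + 1)} ∈ u := by
      rintro a ⟨F, hFA, hFc, hFs⟩
      have h1 : A ∩ (↑F : Set ℕ)ᶜ ∈ u :=
        u.1.inter_mem hAu (cofinite_mem u hu F.finite_toSet)
      refine u.1.mem_of_superset h1 ?_
      rintro b ⟨hbA, hbF⟩
      refine ⟨insert b F, ?_, ?_, ?_⟩
      · intro x hx
        rcases Finset.mem_insert.mp (by exact_mod_cast hx) with h | h
        · exact h ▸ hbA
        · exact hFA h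
      · rw [Finset.card_insert_of_notMem hbF, hFc]
      · rw [Finset.sum_insert hbF, hFs, Nat.add_comm]
    have key : {a | {b | a + b ∈ sumSet A (n + 1)} ∈ u} ∈ sumPow u n :=
      (sumPow u n).1.mem_of_superset ih this
    exact (Ultrafilter.eventually_add (sumPow u n) u (· ∈ sumSet A (n + 1))).mpr key

/-- If `u` is a nonprincipal ultrafilter on `ℕ` and some `A ∈ u` has uniqueness of sums,
then `u` generates a free subsemigroup: `u^n = u^m → n = m` for `n, m ≥ 1`. -/
theorem statement1 (u : Ultrafilter ℕ) (hu : ∀ k : ℕ, u ≠ pure k)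
    (A : Set ℕ) (hAu : A ∈ u) (hA : UniquenessOfSums A) :
    ∀ n m : ℕ, 1 ≤ n → 1 ≤ m → sumPow u n = sumPow u m → n = m := by
  intro n m hn hm heq
  have h1 : sumSet A n ∈ sumPow u n := sumSet_mem u hu A hAu n hn
  have h2 : sumSet A m ∈ sumPow u n := heq ▸ sumSet_mem u hu A hAu m hm
  have h3 : (sumSet A n ∩ sumSet A m).Nonempty :=
    Ultrafilter.nonempty_of_mem ((sumPow u n).1.inter_mem h1 h2)
  obtain ⟨x, ⟨F, hFA, hFc, hFs⟩, ⟨G, hGA, hGc, hGs⟩⟩ := h3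
  have hFG : F = G := hA F G hFA hGA
    (Finset.card_pos.mp (by omega)) (Finset.card_pos.mp (by omega))
    (hFs.trans hGs.symm)
  rw [← hFc, ← hGc, hFG]
end

section
/- Let X ⊆ ℕ be an infinite set with uniqueness of sums, with increasing enumeration ⟨x_n : n < ω⟩, and let A ⊆ FS(X) be X-adequate. Then every element of FS^X(A) is uniquely represented: whenever ⟨a_1, …, a_n⟩ and ⟨b_1, …, b_m⟩ are finite sum subsystems of ⟨x_n⟩ with all terms in A and a_1 + ⋯ + a_n = b_1 + ⋯ + b_m, then n = m and a_i = b_i for all i. -/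
/-- `FS A` is the set of all sums of nonempty finite subsets of `A`. -/
def FS (A : Set ℕ) : Set ℕ :=
  {s | ∃ F : Finset ℕ, F.Nonempty ∧ ↑F ⊆ A ∧ s = ∑ i ∈ F, i}

/-- `⟨a 0, …, a (n-1)⟩` is a (finite) sum subsystem of the sequence `x`: there is a block
sequence `⟨H i⟩` of nonempty finite sets with `a i = ∑_{k ∈ H i} x k`. -/
def IsSumSubsystem (x : ℕ → ℕ) {n : ℕ} (a : Fin n → ℕ) : Prop :=
  ∃ H : Fin n → Finset ℕ, (∀ i, (H i).Nonempty) ∧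
    (∀ i j : Fin n, i < j → ∀ k ∈ H i, ∀ l ∈ H j, k < l) ∧
    ∀ i, a i = ∑ k ∈ H i, x k

/-- `A` is `X`-adequate: `A ⊆ FS X` and for every subsequence of the increasing enumeration
of `X` there is a unique `m` such that the sum of the first `m + 1` terms lies in `A`. -/
def IsAdequateSet (X A : Set ℕ) : Prop :=
  A ⊆ FS X ∧ ∀ g : ℕ → ℕ, StrictMono g →
    ∃! m : ℕ, (∑ k ∈ Finset.range (m + 1), Nat.nth (· ∈ X) (g k)) ∈ A

/-! ### Auxiliary machinery -/

/-- Increasing enumeration of a finite set, extended arbitrarily (but strictly monotonically). -/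
noncomputable def enumF (U : Finset ℕ) (k : ℕ) : ℕ :=
  if h : k < U.card then (U.orderIsoOfFin rfl ⟨k, h⟩ : ℕ) else (U.sup id) + 1 + (k - U.card)

lemma enumF_mem (U : Finset ℕ) {k : ℕ} (h : k < U.card) : enumF U k ∈ U := by
  rw [enumF, dif_pos h]
  exact (U.orderIsoOfFin rfl ⟨k, h⟩).2

lemma enumF_strictMono (U : Finset ℕ) : StrictMono (enumF U) := by
  apply strictMono_nat_of_lt_succ
  intro k
  by_cases h1 : k + 1 < U.card
  · have h0 : k < U.card := by omega
    rw [enumF, enumF, dif_pos h0, dif_pos h1]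
    have : (U.orderIsoOfFin rfl) ⟨k, h0⟩ < (U.orderIsoOfFin rfl) ⟨k+1, h1⟩ :=
      (U.orderIsoOfFin rfl).strictMono (by simp [Fin.lt_def])
    exact this
  · by_cases h0 : k < U.card
    · rw [enumF, enumF, dif_pos h0, dif_neg h1]
      have hmem := (U.orderIsoOfFin rfl ⟨k, h0⟩).2
      have : ((U.orderIsoOfFin rfl ⟨k, h0⟩ : ℕ)) ≤ U.sup id := Finset.le_sup (f := id) hmem
      omega
    · rw [enumF, enumF, dif_neg h0, dif_neg h1]
      omega

lemma enumF_surjOn (U : Finset ℕ) {t : ℕ} (ht : t ∈ U) : ∃ j < U.card, t = enumF U j := by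
  obtain ⟨j, hj⟩ := (U.orderIsoOfFin rfl).surjective ⟨t, ht⟩
  refine ⟨j, j.isLt, ?_⟩
  rw [enumF, dif_pos j.isLt]
  rw [show (⟨(j:ℕ), j.isLt⟩ : Fin U.card) = j from rfl, hj]

lemma down_chain (U S₁ S₂ : Finset ℕ) (h1 : S₁ ⊆ U) (h2 : S₂ ⊆ U)
    (d1 : ∀ s ∈ S₁, ∀ t ∈ U, t ∉ S₁ → s < t)
    (d2 : ∀ s ∈ S₂, ∀ t ∈ U, t ∉ S₂ → s < t) :
    S₁ ⊆ S₂ ∨ S₂ ⊆ S₁ := by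
  by_contra hc
  push_neg at hc
  obtain ⟨s1, hs1, hs1'⟩ := Finset.not_subset.mp hc.1
  obtain ⟨s2, hs2, hs2'⟩ := Finset.not_subset.mp hc.2
  exact lt_asymm (d1 s1 hs1 s2 (h2 hs2) hs2') (d2 s2 hs2 s1 (h1 hs1) hs1')

/-- An initial (downward-closed) subset of `U` is the image of an initial segment
under the increasing enumeration of `U`. -/
lemma initseg_eq (U S : Finset ℕ) (hS : S ⊆ U)
    (down : ∀ s ∈ S, ∀ t ∈ U, t ∉ S → s < t) :
    S = (Finset.range S.card).image (enumF U) := by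
  set T := (Finset.range S.card).image (enumF U) with hT
  have hcard : S.card ≤ U.card := Finset.card_le_card hS
  have hTU : T ⊆ U := by
    intro t ht
    obtain ⟨k, hk, rfl⟩ := Finset.mem_image.mp ht
    exact enumF_mem U (lt_of_lt_of_le (Finset.mem_range.mp hk) hcard)
  have hTcard : T.card = S.card := by
    rw [hT, Finset.card_image_of_injective _ (enumF_strictMono U).injective, Finset.card_range]
  have downT : ∀ s ∈ T, ∀ t ∈ U, t ∉ T → s < t := by
    intro s hs t htU htT
    by_contra hle
    push_neg at hle
    obtain ⟨k, hk, rfl⟩ := Finset.mem_image.mp hs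
    obtain ⟨j, _, rfl⟩ := enumF_surjOn U htU
    have hjk : j ≤ k := (enumF_strictMono U).le_iff_le.mp hle
    exact htT (Finset.mem_image.mpr ⟨j, Finset.mem_range.mpr
      (lt_of_le_of_lt hjk (Finset.mem_range.mp hk)), rfl⟩)
  rcases down_chain U S T hS hTU down downT with h | h
  · exact Finset.eq_of_subset_of_card_le h (le_of_eq hTcard)
  · exact (Finset.eq_of_subset_of_card_le h (le_of_eq hTcard.symm)).symm

lemma blocks_pd {n₀ : ℕ} (L : Fin n₀ → Finset ℕ)
    (hlt : ∀ i j : Fin n₀, i < j → ∀ k ∈ L i, ∀ l ∈ L j, k < l) :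
    (↑(Finset.univ : Finset (Fin n₀)) : Set (Fin n₀)).PairwiseDisjoint L := by
  intro i _ j _ hij
  simp only [Function.onFun]
  rw [Finset.disjoint_left]
  intro t hti htj
  rcases lt_or_gt_of_ne hij with h | h
  · exact lt_irrefl t (hlt i j h t hti t htj)
  · exact lt_irrefl t (hlt j i h t htj t hti)

lemma sum_blocks {n₀ : ℕ} (x : ℕ → ℕ) (L : Fin n₀ → Finset ℕ)
    (hlt : ∀ i j : Fin n₀, i < j → ∀ k ∈ L i, ∀ l ∈ L j, k < l)
    (a : Fin n₀ → ℕ) (hA : ∀ i, a i = ∑ k ∈ L i, x k) :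
    ∑ i, a i = ∑ k ∈ Finset.univ.biUnion L, x k := by
  rw [Finset.sum_biUnion (blocks_pd L hlt)]
  exact Finset.sum_congr rfl fun i _ => hA i

lemma first_down {n₀ : ℕ} (L : Fin (n₀+1) → Finset ℕ)
    (hlt : ∀ i j : Fin (n₀+1), i < j → ∀ k ∈ L i, ∀ l ∈ L j, k < l) :
    ∀ s ∈ L 0, ∀ t ∈ Finset.univ.biUnion L, t ∉ L 0 → s < t := by
  intro s hs t ht ht0
  obtain ⟨j, _, htj⟩ := Finset.mem_biUnion.mp ht
  have hj : (0 : Fin (n₀+1)) < j := by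
    rcases eq_or_ne j 0 with rfl | hne
    · exact absurd htj ht0
    · exact Fin.pos_of_ne_zero hne
  exact hlt 0 j hj s hs t htj

lemma aux_main (X : Set ℕ) (hXinf : X.Infinite) (hX : UniquenessOfSums X)
    (A : Set ℕ) (hA : IsAdequateSet X A) :
    ∀ n m : ℕ, 1 ≤ n → 1 ≤ m → ∀ (a : Fin n → ℕ) (b : Fin m → ℕ),
    (∀ i, a i ∈ A) → (∀ j, b j ∈ A) →
    IsSumSubsystem (Nat.nth (· ∈ X)) a → IsSumSubsystem (Nat.nth (· ∈ X)) b →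
    (∑ i, a i) = ∑ j, b j →
    ∃ h : n = m, ∀ i : Fin n, a i = b (Fin.cast h i) := by
  have hxmono : StrictMono (Nat.nth (· ∈ X)) := Nat.nth_strictMono hXinf
  have hxmem : ∀ k, Nat.nth (· ∈ X) k ∈ X := fun k => Nat.nth_mem_of_infinite hXinf k
  set x := Nat.nth (· ∈ X) with hxdef
  intro n
  induction n with
  | zero => intro m hn; exact absurd hn (by omega)
  | succ n' ih =>
    intro m hn hm a b haA hbA ha hb hsum
    obtain ⟨m', rfl⟩ : ∃ m', m = m' + 1 := ⟨m - 1, by omega⟩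
    obtain ⟨H, hHne, hHlt, hHa⟩ := ha
    obtain ⟨K, hKne, hKlt, hKb⟩ := hb
    set U := Finset.univ.biUnion H with hUdef
    set V := Finset.univ.biUnion K with hVdef
    have hsU : ∑ i, a i = ∑ k ∈ U, x k := sum_blocks x H hHlt a hHa
    have hsV : ∑ j, b j = ∑ k ∈ V, x k := sum_blocks x K hKlt b hKb
    have hH0U : H 0 ⊆ U := fun t ht => Finset.mem_biUnion.mpr ⟨0, Finset.mem_univ 0, ht⟩
    have hK0V : K 0 ⊆ V := fun t ht => Finset.mem_biUnion.mpr ⟨0, Finset.mem_univ 0, ht⟩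
    have hUne : U.Nonempty := (hHne 0).mono hH0U
    have hVne : V.Nonempty := (hKne 0).mono hK0V
    have himg : ∀ W : Finset ℕ, ∑ k ∈ W, x k = ∑ j ∈ W.image x, j := by
      intro W
      rw [Finset.sum_image (fun p _ q _ h => hxmono.injective h)]
    have hUV : U = V := by
      have hs1 : ↑(U.image x) ⊆ X := by
        intro t ht
        obtain ⟨k, _, rfl⟩ := Finset.mem_image.mp (Finset.mem_coe.mp ht)
        exact hxmem k
      have hs2 : ↑(V.image x) ⊆ X := by
        intro t ht
        obtain ⟨k, _, rfl⟩ := Finset.mem_image.mp (Finset.mem_coe.mp ht)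
        exact hxmem k
      have heq : U.image x = V.image x :=
        hX _ _ hs1 hs2 (hUne.image x) (hVne.image x)
          (by rw [← himg U, ← himg V, ← hsU, ← hsV]; exact hsum)
      exact Finset.image_injective hxmono.injective heq
    -- first blocks coincide
    have hH0eq : H 0 = (Finset.range (H 0).card).image (enumF U) :=
      initseg_eq U (H 0) hH0U (first_down H hHlt)
    have hK0eq' : K 0 = (Finset.range (K 0).card).image (enumF V) :=
      initseg_eq V (K 0) hK0V (first_down K hKlt)
    have hK0eq : K 0 = (Finset.range (K 0).card).image (enumF U) := by
      rw [← hUV] at hK0eq'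
      exact hK0eq'
    have hsumH0 : a 0 = ∑ k ∈ Finset.range (H 0).card, x (enumF U k) := by
      rw [hHa 0]
      conv_lhs => rw [hH0eq]
      rw [Finset.sum_image (fun p _ q _ h => (enumF_strictMono U).injective h)]
    have hsumK0 : b 0 = ∑ k ∈ Finset.range (K 0).card, x (enumF U k) := by
      rw [hKb 0]
      conv_lhs => rw [hK0eq]
      rw [Finset.sum_image (fun p _ q _ h => (enumF_strictMono U).injective h)]
    have hp1 : 1 ≤ (H 0).card := Finset.card_pos.mpr (hHne 0)
    have hq1 : 1 ≤ (K 0).card := Finset.card_pos.mpr (hKne 0)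
    obtain ⟨w, hw, hwuniq⟩ := hA.2 (enumF U) (enumF_strictMono U)
    have hpw : (H 0).card - 1 = w := by
      apply hwuniq
      have hrw : (H 0).card - 1 + 1 = (H 0).card := by omega
      rw [hrw, ← hxdef, ← hsumH0]
      exact haA 0
    have hqw : (K 0).card - 1 = w := by
      apply hwuniq
      have hrw : (K 0).card - 1 + 1 = (K 0).card := by omega
      rw [hrw, ← hxdef, ← hsumK0]
      exact hbA 0
    have hpq : (H 0).card = (K 0).card := by omega
    have hHK0 : H 0 = K 0 := by rw [hH0eq, hK0eq, hpq]
    have hab0 : a 0 = b 0 := by rw [hHa 0, hKb 0, hHK0]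
    have hdiff : U \ H 0 = V \ K 0 := by rw [hUV, hHK0]
    rcases Nat.eq_zero_or_pos n' with rfl | hn'
    · -- n = 1 : we must have m = 1
      have hUeq : U = H 0 := by
        apply Finset.Subset.antisymm
        · intro t ht
          obtain ⟨j, _, htj⟩ := Finset.mem_biUnion.mp ht
          rwa [show j = 0 from Fin.ext (by have := j.isLt; omega)] at htj
        · exact hH0U
      have hm'0 : m' = 0 := by
        by_contra hm'
        have h1lt : (0 : Fin (m'+1)) < ⟨1, by omega⟩ := by
          simp [Fin.lt_def]
        obtain ⟨t, ht⟩ := hKne ⟨1, by omega⟩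
        have htV : t ∈ V := Finset.mem_biUnion.mpr ⟨_, Finset.mem_univ _, ht⟩
        have htK0 : t ∉ K 0 := fun h0 => lt_irrefl t (hKlt 0 ⟨1, by omega⟩ h1lt t h0 t ht)
        have htU : t ∈ U \ H 0 := by
          rw [hdiff]
          exact Finset.mem_sdiff.mpr ⟨htV, htK0⟩
        rw [hUeq] at htU
        simp at htU
      subst hm'0
      refine ⟨rfl, fun i => ?_⟩
      rw [show i = 0 from Fin.ext (by have := i.isLt; omega)]
      rw [show Fin.cast rfl (0 : Fin 1) = 0 from rfl]
      exact hab0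
    · -- n ≥ 2 : first m ≥ 2
      have hm'1 : 1 ≤ m' := by
        by_contra hmc
        have hm'0 : m' = 0 := by omega
        subst hm'0
        have hVeq : V = K 0 := by
          apply Finset.Subset.antisymm
          · intro t ht
            obtain ⟨j, _, htj⟩ := Finset.mem_biUnion.mp ht
            rwa [show j = 0 from Fin.ext (by have := j.isLt; omega)] at htj
          · exact hK0V
        have h1lt : (0 : Fin (n'+1)) < ⟨1, by omega⟩ := by
          simp [Fin.lt_def]
        obtain ⟨t, ht⟩ := hHne ⟨1, by omega⟩
        have htUm : t ∈ U := Finset.mem_biUnion.mpr ⟨_, Finset.mem_univ _, ht⟩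
        have htH0 : t ∉ H 0 := fun h0 => lt_irrefl t (hHlt 0 ⟨1, by omega⟩ h1lt t h0 t ht)
        have htV : t ∈ V \ K 0 := by
          rw [← hdiff]
          exact Finset.mem_sdiff.mpr ⟨htUm, htH0⟩
        rw [hVeq] at htV
        simp at htV
      have htail : (∑ i : Fin n', a i.succ) = ∑ j : Fin m', b j.succ := by
        have h1 := hsum
        rw [Fin.sum_univ_succ, Fin.sum_univ_succ, hab0] at h1
        exact Nat.add_left_cancel h1
      obtain ⟨hnm, htl⟩ := ih m' hn' hm'1 (fun i => a i.succ) (fun j => b j.succ)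
        (fun i => haA i.succ) (fun j => hbA j.succ)
        ⟨fun i => H i.succ, fun i => hHne i.succ,
          fun i j hij => hHlt i.succ j.succ (Fin.succ_lt_succ_iff.mpr hij),
          fun i => hHa i.succ⟩
        ⟨fun j => K j.succ, fun j => hKne j.succ,
          fun i j hij => hKlt i.succ j.succ (Fin.succ_lt_succ_iff.mpr hij),
          fun j => hKb j.succ⟩
        htail
      have hh : n' + 1 = m' + 1 := by omega
      refine ⟨hh, fun i => ?_⟩
      refine Fin.cases ?_ ?_ i
      · rw [show Fin.cast hh (0 : Fin (n'+1)) = 0 from Fin.ext (by simp)]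
        exact hab0
      · intro j
        have hval : Fin.cast hh j.succ = (Fin.cast hnm j).succ := Fin.ext (by simp)
        rw [hval]
        exact htl j

/-- If `X` is infinite with uniqueness of sums and `A` is `X`-adequate, then every element of
`FS^X(A)` is uniquely represented: two sum subsystems of the increasing enumeration of `X`,
with all terms in `A` and equal total sums, coincide. -/
theorem statement2 (X : Set ℕ) (hXinf : X.Infinite) (hX : UniquenessOfSums X)
    (A : Set ℕ) (hA : IsAdequateSet X A)
    {n m : ℕ} (hn : 1 ≤ n) (hm : 1 ≤ m)
    (a : Fin n → ℕ) (b : Fin m → ℕ)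
    (haA : ∀ i, a i ∈ A) (hbA : ∀ j, b j ∈ A)
    (ha : IsSumSubsystem (Nat.nth (· ∈ X)) a)
    (hb : IsSumSubsystem (Nat.nth (· ∈ X)) b)
    (hsum : (∑ i, a i) = ∑ j, b j) :
    ∃ h : n = m, ∀ i : Fin n, a i = b (Fin.cast h i) := by
  exact aux_main X hXinf hX A hA n m hn hm a b haA hbA ha hb hsum
end

section
/- Let X ⊆ ℕ be an infinite set with uniqueness of sums, let u be an X-adequate ultrafilter on ℕ, and let A ∈ u witness this. Then for every n ≥ 1, FS_n^X(A) ∈ u^n. -/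
open Filter

attribute [local instance] Ultrafilter.add Ultrafilter.addSemigroup

/-- `FSnX n X A` is the set of sums `a 0 + ⋯ + a (n-1)` with all `a i ∈ A` and
`⟨a 0, …, a (n-1)⟩` a sum subsystem of the increasing enumeration of `X`. -/
def FSnX (n : ℕ) (X A : Set ℕ) : Set ℕ :=
  {s | ∃ a : Fin n → ℕ, (∀ i, a i ∈ A) ∧ IsSumSubsystem (Nat.nth (· ∈ X)) a ∧ s = ∑ i, a i}

lemma exists_indices_of_mem_FS {X Y : Set ℕ} (hYX : Y ⊆ X) {k : ℕ} (hk : k ∈ FS Y) :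
    ∃ G : Finset ℕ, G.Nonempty ∧ (∀ j ∈ G, Nat.nth (· ∈ X) j ∈ Y) ∧
      k = ∑ j ∈ G, Nat.nth (· ∈ X) j := by
  classical
  obtain ⟨F, hFne, hFY, rfl⟩ := hk
  have hnth : ∀ b ∈ F, Nat.nth (· ∈ X) (Nat.count (· ∈ X) b) = b :=
    fun b hb => Nat.nth_count (hYX (hFY hb))
  refine ⟨F.image (Nat.count (· ∈ X)), hFne.image _, ?_, ?_⟩
  · simp only [Finset.mem_image, forall_exists_index, and_imp]
    rintro _ b hb rfl
    rw [hnth b hb]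
    exact hFY hb
  · rw [Finset.sum_image fun b hb c hc h => by rw [← hnth b hb, ← hnth c hc, h]]
    exact Finset.sum_congr rfl fun b hb => (hnth b hb).symm

lemma IsSumSubsystem.exists_snoc {x : ℕ → ℕ} {n : ℕ} {a : Fin n → ℕ}
    (ha : IsSumSubsystem x a) :
    ∃ N, ∀ G : Finset ℕ, G.Nonempty → (∀ j ∈ G, N < j) →
      IsSumSubsystem x (Fin.snoc (α := fun _ => ℕ) a (∑ j ∈ G, x j)) := by
  obtain ⟨H, hHne, hHlt, hHsum⟩ := ha
  refine ⟨Finset.univ.sup fun i => (H i).sup id, fun G hGne hGgt => ?_⟩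
  refine ⟨Fin.snoc (α := fun _ => Finset ℕ) H G, Fin.lastCases (by simpa) (by simpa), ?_,
    Fin.lastCases (by simp) (by simpa)⟩
  intro i j hij
  induction j using Fin.lastCases with
  | last =>
    obtain ⟨i, rfl⟩ := Fin.exists_castSucc_eq.mpr (Fin.ne_last_of_lt hij)
    simp only [Fin.snoc_castSucc, Fin.snoc_last]
    intro k hk l hl
    calc k ≤ Finset.univ.sup fun i => (H i).sup id :=
          (Finset.le_sup (f := id) hk).trans (Finset.le_sup (f := fun i => (H i).sup id)
            (Finset.mem_univ i))
      _ < l := hGgt l hl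
  | cast j =>
    obtain ⟨i, rfl⟩ := Fin.exists_castSucc_eq.mpr (hij.trans (Fin.castSucc_lt_last j)).ne
    simp only [Fin.snoc_castSucc]
    exact hHlt i j (Fin.castSucc_lt_castSucc_iff.mp hij)

lemma exists_add_mem_FSnX_succ {X : Set ℕ} (hX : X.Infinite) {A : Set ℕ} {n m : ℕ}
    (hm : m ∈ FSnX n X A) :
    ∃ c, A ∩ FS {b ∈ X | c < b} ⊆ {k | m + k ∈ FSnX (n + 1) X A} := by
  obtain ⟨a, haA, hsub, rfl⟩ := hm
  obtain ⟨N, hN⟩ := hsub.exists_snoc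
  refine ⟨Nat.nth (· ∈ X) N, ?_⟩
  rintro k ⟨hkA, hkFS⟩
  obtain ⟨G, hGne, hGY, rfl⟩ := exists_indices_of_mem_FS (Set.sep_subset X _) hkFS
  have hGN : ∀ j ∈ G, N < j := fun j hj => (Nat.nth_strictMono hX).lt_iff_lt.mp (hGY j hj).2
  refine ⟨_, Fin.lastCases (by simpa) (by simpa), hN G hGne hGN, ?_⟩
  simp [Fin.sum_univ_castSucc]

lemma finite_diff_sep_lt (X : Set ℕ) (c : ℕ) : (X \ {b ∈ X | c < b}).Finite :=
  (Set.finite_Iic c).subset fun _ ⟨hbX, hb⟩ => not_lt.mp fun hcb => hb ⟨hbX, hcb⟩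

theorem statement3_general (X : Set ℕ) (hXinf : X.Infinite)
    (u : Ultrafilter ℕ) (A : Set ℕ) (hAu : A ∈ u)
    (hcof : ∀ Y : Set ℕ, Y ⊆ X → (X \ Y).Finite → FS Y ∈ u)
    (n : ℕ) (hn : 1 ≤ n) :
    FSnX n X A ∈ sumPow u n := by
  have hstep : ∀ n, ∀ m ∈ FSnX n X A, {k | m + k ∈ FSnX (n + 1) X A} ∈ u := by
    intro n m hm
    obtain ⟨c, hc⟩ := exists_add_mem_FSnX_succ hXinf hm
    exact mem_of_superset (inter_mem hAu
      (hcof _ (Set.sep_subset X _) (finite_diff_sep_lt X c))) hc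
  induction n, hn using Nat.le_induction with
  | base =>
    have hzero : (0 : ℕ) ∈ FSnX 0 X A :=
      ⟨Fin.elim0, (·.elim0), ⟨Fin.elim0, (·.elim0), fun i => i.elim0, (·.elim0)⟩, rfl⟩
    simpa [sumPow] using hstep 0 0 hzero
  | succ n hn ih =>
    rw [sumPow_succ u hn]
    exact (Ultrafilter.eventually_add _ _ _).mpr (Filter.mem_of_superset ih (hstep n))

/-- If `X` is infinite with uniqueness of sums and `u` is an `X`-adequate ultrafilter,
witnessed by `A`, then `FS_n^X(A) ∈ u^n` for every `n ≥ 1`. -/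
theorem statement3 (X : Set ℕ) (hXinf : X.Infinite) (hX : UniquenessOfSums X)
    (u : Ultrafilter ℕ) (A : Set ℕ) (hAu : A ∈ u) (hA : IsAdequateSet X A)
    (hcof : ∀ Y : Set ℕ, Y ⊆ X → (X \ Y).Finite → FS Y ∈ u)
    (n : ℕ) (hn : 1 ≤ n) :
    FSnX n X A ∈ sumPow u n :=
  statement3_general X hXinf u A hAu hcof n hn
end

section
/- Let X ⊆ ℕ be a set with uniqueness of sums, let u be an ultrafilter on ℕ, and let ⟨u_n : n < ω⟩ be a sequence of ultrafilters on ℕ. If u and each u_n are X-adequate, then the indexed sum ⊕_u u_n is X-adequate. -/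
/-- An ultrafilter `u` is `X`-adequate: some `X`-adequate set belongs to `u`, and `FS Y ∈ u`
for every cofinite subset `Y` of `X`. -/
def IsAdequateUltrafilter (X : Set ℕ) (u : Ultrafilter ℕ) : Prop :=
  (∃ A ∈ u, IsAdequateSet X A) ∧
    ∀ Y : Set ℕ, Y ⊆ X → (X \ Y).Finite → FS Y ∈ u

/-- The Blass–Frolík sum `Σ_u u_n`, an ultrafilter on `ℕ × ℕ`:
`A ∈ BFsum u v ↔ {n | {m | (n, m) ∈ A} ∈ v n} ∈ u`. -/
def BFsum (u : Ultrafilter ℕ) (v : ℕ → Ultrafilter ℕ) : Ultrafilter (ℕ × ℕ) :=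
  u.bind fun n => (v n).map fun m => (n, m)

/-- The indexed sum `⊕_u u_n`: the image of `BFsum u v` under `(n, m) ↦ n + m`. -/
def indexedSum (u : Ultrafilter ℕ) (v : ℕ → Ultrafilter ℕ) : Ultrafilter ℕ :=
  (BFsum u v).map fun q => q.1 + q.2

lemma mem_indexedSum (u : Ultrafilter ℕ) (v : ℕ → Ultrafilter ℕ) (S : Set ℕ) :
    S ∈ indexedSum u v ↔ {n | {m | n + m ∈ S} ∈ v n} ∈ u := by
  rw [indexedSum, Ultrafilter.mem_map, BFsum]
  change _ ∈ Filter.bind _ _ ↔ _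
  rw [Filter.mem_bind']
  rfl

/-- If some `X`-adequate set exists, then `X` is infinite. -/
lemma infinite_of_adequate (X A : Set ℕ) (h : IsAdequateSet X A) : X.Infinite := by
  by_contra hfin
  rw [Set.not_infinite] at hfin
  have hg : StrictMono (fun k => hfin.toFinset.card + k) := fun a b hab => by simpa
  obtain ⟨m, hm, huniq⟩ := h.2 _ hg
  have hz : ∀ m' : ℕ,
      (∑ k ∈ Finset.range (m' + 1), Nat.nth (· ∈ X) (hfin.toFinset.card + k)) = 0 := by
    intro m'
    apply Finset.sum_eq_zero
    intro k _
    exact Nat.nth_of_card_le hfin (Nat.le_add_right _ _)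
  have h0 : (0 : ℕ) ∈ A := by rw [← hz m]; exact hm
  have hmem : ∀ m' : ℕ,
      (∑ k ∈ Finset.range (m' + 1), Nat.nth (· ∈ X) (hfin.toFinset.card + k)) ∈ A := by
    intro m'; rw [hz m']; exact h0
  have h1 : m + 1 = m := huniq (m + 1) (hmem (m + 1))
  omega

/-- If `X` has uniqueness of sums and `u` and all `u_n` are `X`-adequate ultrafilters,
then the indexed sum `⊕_u u_n` is `X`-adequate. -/
theorem statement5 (X : Set ℕ) (hX : UniquenessOfSums X)
    (u : Ultrafilter ℕ) (v : ℕ → Ultrafilter ℕ)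
    (hu : IsAdequateUltrafilter X u) (hv : ∀ n, IsAdequateUltrafilter X (v n)) :
    IsAdequateUltrafilter X (indexedSum u v) := by
  obtain ⟨⟨A, hAu, hAad⟩, hucof⟩ := hu
  have hXinf : X.Infinite := infinite_of_adequate X A hAad
  have hxmono : StrictMono (Nat.nth (· ∈ X)) := Nat.nth_strictMono hXinf
  have hxX : ∀ k, Nat.nth (· ∈ X) k ∈ X := Nat.nth_mem_of_infinite hXinf
  choose A' hA'mem hA'ad using fun n => (hv n).1
  -- Part 2 : cofinite FS sets
  have part2 : ∀ Y : Set ℕ, Y ⊆ X → (X \ Y).Finite → FS Y ∈ indexedSum u v := by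
    intro Y hYX hYfin
    rw [mem_indexedSum]
    apply Filter.mem_of_superset (hucof Y hYX hYfin)
    rintro n ⟨F, hFne, hFY, rfl⟩
    have hsub : Y \ ↑F ⊆ X := fun a ha => hYX ha.1
    have hfin2 : (X \ (Y \ ↑F)).Finite := by
      apply Set.Finite.subset (hYfin.union F.finite_toSet)
      intro a ha
      by_cases haY : a ∈ Y
      · right; by_contra haF; exact ha.2 ⟨haY, haF⟩
      · left; exact ⟨ha.1, haY⟩
    apply Filter.mem_of_superset ((hv _).2 (Y \ ↑F) hsub hfin2)
    rintro m ⟨G, hGne, hGY, rfl⟩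
    have hdisj : Disjoint F G := by
      rw [Finset.disjoint_left]
      intro a haF haG
      exact (hGY haG).2 haF
    refine ⟨F ∪ G, hFne.mono Finset.subset_union_left, ?_, ?_⟩
    · intro a ha
      rcases Finset.mem_union.1 ha with h | h
      · exact hFY h
      · exact (hGY h).1
    · rw [Finset.sum_union hdisj]
  -- The adequate set B for the indexed sum
  set B : Set ℕ := {s | ∃ F G : Finset ℕ, ↑F ⊆ X ∧ ↑G ⊆ X ∧ F.Nonempty ∧ G.Nonempty ∧
      (∀ a ∈ F, ∀ b ∈ G, a < b) ∧ ((∑ i ∈ F, i) ∈ A) ∧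
      ((∑ i ∈ G, i) ∈ A' (∑ i ∈ F, i)) ∧ s = (∑ i ∈ F, i) + ∑ i ∈ G, i} with hBdef
  refine ⟨⟨B, ?_, ?_, ?_⟩, part2⟩
  · -- B ∈ indexedSum u v
    rw [mem_indexedSum]
    apply Filter.mem_of_superset hAu
    intro n hnA
    obtain ⟨F, hFne, hFX, hnF⟩ := hAad.1 hnA
    set Y₀ : Set ℕ := {a ∈ X | ∀ b ∈ F, b < a} with hY₀def
    have hY₀X : Y₀ ⊆ X := fun a ha => ha.1
    have hY₀fin : (X \ Y₀).Finite := by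
      apply Set.Finite.subset (Set.finite_Iic (F.max' hFne))
      intro a ha
      rcases ha with ⟨haX, haY⟩
      simp only [hY₀def, Set.mem_setOf_eq, not_and, not_forall] at haY
      obtain ⟨b, hbF, hba⟩ := haY haX
      exact le_trans (not_lt.1 hba) (F.le_max' b hbF)
    have hmem : A' n ∩ FS Y₀ ∈ v n :=
      Filter.inter_mem (hA'mem n) ((hv n).2 Y₀ hY₀X hY₀fin)
    apply Filter.mem_of_superset hmem
    rintro m ⟨hmA', G, hGne, hGY₀, rfl⟩
    refine ⟨F, G, hFX, fun a ha => (hGY₀ ha).1, hFne, hGne, ?_, ?_, ?_, ?_⟩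
    · intro a ha b hb
      exact (hGY₀ hb).2 a ha
    · rw [← hnF]; exact hnA
    · rw [← hnF]; exact hmA'
    · rw [← hnF]
  · -- B ⊆ FS X
    rintro s ⟨F, G, hFX, hGX, hFne, hGne, hord, _, _, rfl⟩
    have hdisj : Disjoint F G := by
      rw [Finset.disjoint_left]
      intro a haF haG
      exact lt_irrefl a (hord a haF a haG)
    refine ⟨F ∪ G, hFne.mono Finset.subset_union_left, ?_, ?_⟩
    · intro a ha
      rcases Finset.mem_union.1 ha with h | h
      · exact hFX h
      · exact hGX h
    · rw [Finset.sum_union hdisj]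
  · -- B is adequate
    intro g hg
    set y : ℕ → ℕ := fun k => Nat.nth (· ∈ X) (g k) with hydef
    have hymono : StrictMono y := hxmono.comp hg
    have hyinj : Function.Injective y := hymono.injective
    have himg : ∀ (q : ℕ) (f : ℕ → ℕ), Function.Injective f →
        (∑ i ∈ (Finset.range q).image f, i) = ∑ k ∈ Finset.range q, f k :=
      fun q f hf => Finset.sum_image (fun a _ b _ h => hf h)
    have hyinj' : Function.Injective (fun k => y (g 0 + 0 + k)) := by
      intro a b h
      have := hyinj h
      omega
    show ∃! m : ℕ, (∑ k ∈ Finset.range (m + 1), y k) ∈ B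
    obtain ⟨m₁, hm₁, hm₁u⟩ := hAad.2 g hg
    have hm₁' : (∑ k ∈ Finset.range (m₁ + 1), y k) ∈ A := hm₁
    have hm₁u' : ∀ j : ℕ, (∑ k ∈ Finset.range (j + 1), y k) ∈ A → j = m₁ :=
      fun j hj => hm₁u j hj
    set n : ℕ := ∑ k ∈ Finset.range (m₁ + 1), y k with hndef
    have hg' : StrictMono (fun k => g (m₁ + 1 + k)) :=
      hg.comp fun a b hab => by omega
    obtain ⟨m₂, hm₂, hm₂u⟩ := (hA'ad n).2 _ hg'
    have hm₂' : (∑ k ∈ Finset.range (m₂ + 1), y (m₁ + 1 + k)) ∈ A' n := hm₂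
    have hm₂u' : ∀ q : ℕ, (∑ k ∈ Finset.range (q + 1), y (m₁ + 1 + k)) ∈ A' n → q = m₂ :=
      fun q hq => hm₂u q hq
    have hytinj : Function.Injective (fun k => y (m₁ + 1 + k)) := by
      intro a b h
      have := hyinj h
      omega
    refine ⟨m₁ + m₂ + 1, ?_, ?_⟩
    · -- existence
      refine ⟨(Finset.range (m₁ + 1)).image y,
        (Finset.range (m₂ + 1)).image (fun k => y (m₁ + 1 + k)), ?_, ?_, ?_, ?_, ?_, ?_, ?_, ?_⟩
      · intro a ha
        simp only [Finset.coe_image, Set.mem_image] at ha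
        obtain ⟨k, _, rfl⟩ := ha
        exact hxX (g k)
      · intro a ha
        simp only [Finset.coe_image, Set.mem_image] at ha
        obtain ⟨k, _, rfl⟩ := ha
        exact hxX (g (m₁ + 1 + k))
      · exact (Finset.nonempty_range_iff.2 (Nat.succ_ne_zero _)).image y
      · exact (Finset.nonempty_range_iff.2 (Nat.succ_ne_zero _)).image _
      · intro a ha b hb
        simp only [Finset.mem_image, Finset.mem_range] at ha hb
        obtain ⟨i, hi, rfl⟩ := ha
        obtain ⟨j, hj, rfl⟩ := hb
        exact hymono (by omega)
      · rw [himg _ y hyinj]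
        exact hm₁'
      · rw [himg _ _ hytinj, himg _ y hyinj]
        exact hm₂'
      · rw [himg _ _ hytinj, himg _ y hyinj]
        have he : m₁ + m₂ + 1 + 1 = (m₁ + 1) + (m₂ + 1) := by omega
        rw [he, Finset.sum_range_add]
    · -- uniqueness
      intro p hp
      obtain ⟨F, G, hFX, hGX, hFne, hGne, hord, hFA, hGA, hsum⟩ := hp
      have hdisj : Disjoint F G := by
        rw [Finset.disjoint_left]
        intro a haF haG
        exact lt_irrefl a (hord a haF a haG)
      have hH : F ∪ G = (Finset.range (p + 1)).image y := by
        apply hX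
        · intro a ha
          rcases Finset.mem_coe.1 ha with h
          rcases Finset.mem_union.1 h with h | h
          · exact hFX h
          · exact hGX h
        · intro a ha
          simp only [Finset.coe_image, Set.mem_image] at ha
          obtain ⟨k, _, rfl⟩ := ha
          exact hxX (g k)
        · exact hFne.mono Finset.subset_union_left
        · exact (Finset.nonempty_range_iff.2 (Nat.succ_ne_zero _)).image y
        · rw [Finset.sum_union hdisj, himg _ y hyinj, ← hsum]
      -- F is an initial segment
      set I : Finset ℕ := (Finset.range (p + 1)).filter (fun k => y k ∈ F) with hIdef
      have hFI : F = I.image y := by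
        ext a
        constructor
        · intro haF
          have haFG : a ∈ (Finset.range (p + 1)).image y := by
            rw [← hH]; exact Finset.mem_union_left _ haF
          obtain ⟨k, hk, rfl⟩ := Finset.mem_image.1 haFG
          exact Finset.mem_image.2 ⟨k, Finset.mem_filter.2 ⟨hk, haF⟩, rfl⟩
        · intro ha
          obtain ⟨k, hk, rfl⟩ := Finset.mem_image.1 ha
          exact (Finset.mem_filter.1 hk).2
      have hIne : I.Nonempty := by
        obtain ⟨a, haF⟩ := hFne
        rw [hFI] at haF
        obtain ⟨k, hk, -⟩ := Finset.mem_image.1 haF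
        exact ⟨k, hk⟩
      obtain ⟨j, hjdef⟩ : ∃ j : ℕ, j = I.max' hIne := ⟨_, rfl⟩
      have hjI : j ∈ I := hjdef ▸ I.max'_mem hIne
      have hjF : y j ∈ F := (Finset.mem_filter.1 hjI).2
      have hjp : j ≤ p := by
        have := Finset.mem_range.1 (Finset.mem_filter.1 hjI).1
        omega
      have hIrange : I = Finset.range (j + 1) := by
        ext k
        rw [Finset.mem_range, Nat.lt_succ_iff]
        constructor
        · intro hk
          rw [hjdef]
          exact I.le_max' k hk
        · intro hk
          have hkp : k ∈ Finset.range (p + 1) := Finset.mem_range.2 (by omega)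
          refine Finset.mem_filter.2 ⟨hkp, ?_⟩
          by_contra hkF
          have hkFG : y k ∈ F ∪ G := by
            rw [hH]; exact Finset.mem_image_of_mem y hkp
          have hkG : y k ∈ G := (Finset.mem_union.1 hkFG).resolve_left hkF
          have h1 : y j < y k := hord _ hjF _ hkG
          have h2 : y k ≤ y j := hymono.monotone hk
          omega
      have hFrange : F = (Finset.range (j + 1)).image y := by rw [hFI, hIrange]
      have hsF : (∑ i ∈ F, i) = ∑ k ∈ Finset.range (j + 1), y k := by
        rw [hFrange, himg _ y hyinj]
      have hFA' : (∑ k ∈ Finset.range (j + 1), y k) ∈ A := by rw [← hsF]; exact hFA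
      have hjm₁ : j = m₁ := hm₁u' j hFA'
      subst hjm₁
      have hjltp : j < p := by
        rcases Nat.lt_or_ge j p with h | h
        · exact h
        · exfalso
          have hjp' : j = p := by omega
          have hGF : G ⊆ F := by
            intro b hb
            have hb' : b ∈ F ∪ G := Finset.mem_union_right _ hb
            rw [hH, ← hjp', ← hFrange] at hb'
            exact hb'
          obtain ⟨b, hbG⟩ := hGne
          exact (Finset.disjoint_left.1 hdisj (hGF hbG)) hbG
      have hsplit : (∑ k ∈ Finset.range (p + 1), y k) =
          (∑ k ∈ Finset.range (j + 1), y k) +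
            ∑ k ∈ Finset.range (p - j), y (j + 1 + k) := by
        have he : p + 1 = (j + 1) + (p - j) := by omega
        rw [he, Finset.sum_range_add]
      have hsG : (∑ i ∈ G, i) = ∑ k ∈ Finset.range (p - j), y (j + 1 + k) := by
        have h1 : (∑ i ∈ F, i) + (∑ i ∈ G, i) = ∑ k ∈ Finset.range (p + 1), y k := hsum.symm
        rw [hsF, hsplit] at h1
        omega
      have hnF : (∑ i ∈ F, i) = n := hsF
      have hGA' : (∑ k ∈ Finset.range (p - j - 1 + 1), y (j + 1 + k)) ∈ A' n := by
        have he : p - j - 1 + 1 = p - j := by omega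
        rw [he, ← hsG, ← hnF]
        exact hGA
      have hfin : p - j - 1 = m₂ := hm₂u' (p - j - 1) hGA'
      omega
end

section
/- Let X ⊆ ℕ be a set with uniqueness of sums, let u be an ultrafilter on ℕ, and let ⟨u_n : n < ω⟩ be a sequence of ultrafilters on ℕ. If u and each u_n are X-adequate, then the Blass–Frolík sum Σ_u u_n and the indexed sum ⊕_u u_n are Rudin–Keisler equivalent. -/
/-- Rudin–Keisler equivalence: each ultrafilter is the image of the other under a function. -/
def RKEquiv {α β : Type*} (U : Ultrafilter α) (V : Ultrafilter β) : Prop :=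
  (∃ f : α → β, Ultrafilter.map f U = V) ∧ ∃ g : β → α, Ultrafilter.map g V = U

lemma mem_BFsum (u : Ultrafilter ℕ) (v : ℕ → Ultrafilter ℕ) (s : Set (ℕ × ℕ)) :
    s ∈ BFsum u v ↔ {n | {m | (n, m) ∈ s} ∈ v n} ∈ u := by
  have : s ∈ BFsum u v ↔ s ∈ Filter.bind ↑u (fun n => ↑((v n).map fun m => (n, m))) :=
    Iff.rfl
  rw [this, Filter.mem_bind']
  rfl

open Classical in
lemma enum_image (T : Set ℕ) (hT : T.Infinite) (K : Finset ℕ) (hKT : ∀ b ∈ K, b ∈ T)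
    (hdc : ∀ x ∈ T, x ∉ K → ∀ b ∈ K, b < x) :
    (Finset.range K.card).image (Nat.nth (· ∈ T)) = K := by
  have hT' : (setOf (· ∈ T)).Infinite := hT
  have hmem : ∀ k < K.card, Nat.nth (· ∈ T) k ∈ K := by
    intro k hk
    by_contra hnot
    have hx : Nat.nth (· ∈ T) k ∈ T := Nat.nth_mem_of_infinite hT' k
    have hlt : ∀ b ∈ K, b < Nat.nth (· ∈ T) k := hdc _ hx hnot
    have hsub : K ⊆ (Finset.range k).image (Nat.nth (· ∈ T)) := by
      intro b hb
      have hbT : (· ∈ T) b := hKT b hb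
      have hnc : Nat.nth (· ∈ T) (Nat.count (· ∈ T) b) = b := Nat.nth_count hbT
      refine Finset.mem_image.2 ⟨Nat.count (· ∈ T) b, Finset.mem_range.2 ?_, hnc⟩
      by_contra hge
      push_neg at hge
      have h2 := (Nat.nth_strictMono hT').monotone hge
      have h3 := hlt b hb
      omega
    have h4 := Finset.card_le_card hsub
    have h5 := Finset.card_image_le (s := Finset.range k) (f := Nat.nth (· ∈ T))
    simp at h5
    omega
  have hsub2 : (Finset.range K.card).image (Nat.nth (· ∈ T)) ⊆ K := by
    intro x hx
    obtain ⟨k, hk, rfl⟩ := Finset.mem_image.1 hx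
    exact hmem k (Finset.mem_range.1 hk)
  refine Finset.eq_of_subset_of_card_le hsub2 ?_
  rw [Finset.card_image_of_injective _ (Nat.nth_injective hT'), Finset.card_range]

lemma enum_sum (T : Set ℕ) (hT : T.Infinite) (K : Finset ℕ) (hKT : ∀ b ∈ K, b ∈ T)
    (hdc : ∀ x ∈ T, x ∉ K → ∀ b ∈ K, b < x) :
    (∑ k ∈ Finset.range K.card, Nat.nth (· ∈ T) k) = ∑ i ∈ K, i := by
  have hT' : (setOf (· ∈ T)).Infinite := hT
  conv_rhs => rw [← enum_image T hT K hKT hdc]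
  rw [Finset.sum_image (fun a _ b _ h => Nat.nth_injective hT' h)]

open Classical in
lemma key (X : Set ℕ) (hX : UniquenessOfSums X) (hXinf : X.Infinite) {A : Set ℕ}
    (hA : IsAdequateSet X A)
    {F G F' G' : Finset ℕ} (hFX : ↑F ⊆ X) (hF'X : ↑F' ⊆ X)
    (hFne : F.Nonempty) (hF'ne : F'.Nonempty) (hGne : G.Nonempty) (hG'ne : G'.Nonempty)
    (hG : ∀ x ∈ G, x ∈ X ∧ ∀ a ∈ F, a < x) (hG' : ∀ x ∈ G', x ∈ X ∧ ∀ a ∈ F', a < x)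
    (hFA : (∑ i ∈ F, i) ∈ A) (hF'A : (∑ i ∈ F', i) ∈ A)
    (hsum : (∑ i ∈ F, i) + ∑ i ∈ G, i = (∑ i ∈ F', i) + ∑ i ∈ G', i) :
    (∑ i ∈ F, i) = ∑ i ∈ F', i := by
  -- unions
  have hdisj : Disjoint F G := by
    rw [Finset.disjoint_left]
    intro a haF haG
    exact absurd ((hG a haG).2 a haF) (lt_irrefl a)
  have hdisj' : Disjoint F' G' := by
    rw [Finset.disjoint_left]
    intro a haF haG
    exact absurd ((hG' a haG).2 a haF) (lt_irrefl a)
  have hHX : ↑(F ∪ G) ⊆ X := by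
    intro x hx
    rcases Finset.mem_union.1 hx with h | h
    · exact hFX h
    · exact (hG x h).1
  have hH'X : ↑(F' ∪ G') ⊆ X := by
    intro x hx
    rcases Finset.mem_union.1 hx with h | h
    · exact hF'X h
    · exact (hG' x h).1
  have hHeq : F ∪ G = F' ∪ G' := by
    apply hX _ _ hHX hH'X (hFne.mono Finset.subset_union_left)
      (hF'ne.mono Finset.subset_union_left)
    rw [Finset.sum_union hdisj, Finset.sum_union hdisj', hsum]
  -- the infinite set T
  set T : Set ℕ := ↑(F ∪ G) ∪ {x | x ∈ X ∧ ∀ h ∈ F ∪ G, h < x} with hTdef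
  have hTX : ∀ x ∈ T, x ∈ X := by
    intro x hx
    rcases hx with h | h
    · exact hHX h
    · exact h.1
  have hTinf : T.Infinite := by
    have hsub : X \ Set.Iic (∑ i ∈ F ∪ G, i) ⊆ T := by
      intro x hx
      right
      refine ⟨hx.1, fun h hh => ?_⟩
      have h1 : h ≤ ∑ i ∈ F ∪ G, i := Finset.single_le_sum (fun i _ => Nat.zero_le i) hh
      have h2 : ¬ x ≤ ∑ i ∈ F ∪ G, i := hx.2
      omega
    exact (hXinf.diff (Set.finite_Iic _)).mono hsub
  have hT' : (setOf (· ∈ T)).Infinite := hTinf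
  -- dc hypotheses
  have hKT_F : ∀ b ∈ F, b ∈ T := fun b hb => Or.inl (Finset.mem_union_left _ hb)
  have hdc_F : ∀ x ∈ T, x ∉ F → ∀ b ∈ F, b < x := by
    intro x hx hnx b hb
    rcases hx with h | h
    · rcases Finset.mem_union.1 h with h' | h'
      · exact absurd h' hnx
      · exact (hG x h').2 b hb
    · exact h.2 b (Finset.mem_union_left _ hb)
  have hKT_F' : ∀ b ∈ F', b ∈ T := by
    intro b hb
    exact Or.inl (by rw [hHeq]; exact Finset.mem_union_left _ hb)
  have hdc_F' : ∀ x ∈ T, x ∉ F' → ∀ b ∈ F', b < x := by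
    intro x hx hnx b hb
    rcases hx with h | h
    · rw [hHeq] at h
      rcases Finset.mem_union.1 h with h' | h'
      · exact absurd h' hnx
      · exact (hG' x h').2 b hb
    · exact h.2 b (by rw [hHeq]; exact Finset.mem_union_left _ hb)
  -- the strictly monotone g
  set g : ℕ → ℕ := fun k => Nat.count (· ∈ X) (Nat.nth (· ∈ T) k) with hgdef
  have hXinf' : (setOf (· ∈ X)).Infinite := hXinf
  have hg : StrictMono g := by
    intro a b hab
    exact Nat.count_strict_mono (hTX _ (Nat.nth_mem_of_infinite hT' a))
      (Nat.nth_strictMono hT' hab)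
  have hgX : ∀ k, Nat.nth (· ∈ X) (g k) = Nat.nth (· ∈ T) k := by
    intro k
    exact Nat.nth_count (hTX _ (Nat.nth_mem_of_infinite hT' k))
  -- adequacy gives equal cardinalities
  obtain ⟨m₀, hm₀, huniq⟩ := hA.2 g hg
  have hcardF : 1 ≤ F.card := Finset.card_pos.2 hFne
  have hcardF' : 1 ≤ F'.card := Finset.card_pos.2 hF'ne
  have hsumF : (∑ k ∈ Finset.range ((F.card - 1) + 1), Nat.nth (· ∈ X) (g k)) ∈ A := by
    have : (F.card - 1) + 1 = F.card := by omega
    rw [this]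
    have : ∀ k ∈ Finset.range F.card, Nat.nth (· ∈ X) (g k) = Nat.nth (· ∈ T) k :=
      fun k _ => hgX k
    rw [Finset.sum_congr rfl this, enum_sum T hTinf F hKT_F hdc_F]
    exact hFA
  have hsumF' : (∑ k ∈ Finset.range ((F'.card - 1) + 1), Nat.nth (· ∈ X) (g k)) ∈ A := by
    have : (F'.card - 1) + 1 = F'.card := by omega
    rw [this]
    have : ∀ k ∈ Finset.range F'.card, Nat.nth (· ∈ X) (g k) = Nat.nth (· ∈ T) k :=
      fun k _ => hgX k
    rw [Finset.sum_congr rfl this, enum_sum T hTinf F' hKT_F' hdc_F']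
    exact hF'A
  have hcard : F.card = F'.card := by
    have h1 := huniq _ hsumF
    have h2 := huniq _ hsumF'
    omega
  -- F = F'
  have hFF' : F = F' := by
    by_cases hss : F ⊆ F'
    · exact Finset.eq_of_subset_of_card_le hss (le_of_eq hcard.symm)
    · obtain ⟨a, haF, haF'⟩ := Finset.not_subset.1 hss
      have haG' : a ∈ G' := by
        have : a ∈ F' ∪ G' := by rw [← hHeq]; exact Finset.mem_union_left _ haF
        rcases Finset.mem_union.1 this with h | h
        · exact absurd h haF'
        · exact h
      have hsub : F' ⊆ F := by
        intro b hb
        have hba : b < a := (hG' a haG').2 b hb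
        have hbH : b ∈ F ∪ G := by rw [hHeq]; exact Finset.mem_union_left _ hb
        rcases Finset.mem_union.1 hbH with h | h
        · exact h
        · exact absurd hba (by have := (hG b h).2 a haF; omega)
      exact (Finset.eq_of_subset_of_card_le hsub (le_of_eq hcard)).symm
  rw [hFF']

/-- If `X` has uniqueness of sums and `u` and all `u_n` are `X`-adequate ultrafilters, then the
Blass–Frolík sum `Σ_u u_n` and the indexed sum `⊕_u u_n` are Rudin–Keisler equivalent. -/
theorem statement6 (X : Set ℕ) (hX : UniquenessOfSums X)
    (u : Ultrafilter ℕ) (v : ℕ → Ultrafilter ℕ)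
    (hu : IsAdequateUltrafilter X u) (hv : ∀ n, IsAdequateUltrafilter X (v n)) :
    RKEquiv (BFsum u v) (indexedSum u v) := by
  classical
  -- X is infinite
  have hXinf : X.Infinite := by
    by_contra hfin
    rw [Set.not_infinite] at hfin
    have h1 : FS (∅ : Set ℕ) ∈ u := hu.2 ∅ (Set.empty_subset X) (by simpa using hfin)
    have h2 : FS (∅ : Set ℕ) = ∅ := by
      ext x
      simp only [FS, Set.mem_setOf_eq, Set.mem_empty_iff_false, iff_false]
      rintro ⟨F, hFne, hFsub, -⟩
      obtain ⟨a, ha⟩ := hFne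
      exact (hFsub ha : a ∈ (∅ : Set ℕ))
    rw [h2] at h1
    exact Ultrafilter.empty_notMem h1
  obtain ⟨A, hAu, hAadq⟩ := hu.1
  choose B hBv hBadq using fun n => (hv n).1
  -- decomposition function on FS X
  have hdec : ∀ n : ℕ, ∃ F : Finset ℕ,
      n ∈ FS X → (F.Nonempty ∧ ↑F ⊆ X ∧ n = ∑ i ∈ F, i) := by
    intro n
    by_cases h : n ∈ FS X
    · obtain ⟨F, h1, h2, h3⟩ := h
      exact ⟨F, fun _ => ⟨h1, h2, h3⟩⟩
    · exact ⟨∅, fun h' => absurd h' h⟩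
  choose Fn hFn using hdec
  -- tail sets
  set Y : ℕ → Set ℕ := fun n => {x | x ∈ X ∧ ∀ a ∈ Fn n, a < x} with hYdef
  have hYsub : ∀ n, Y n ⊆ X := fun n x hx => hx.1
  have hYcof : ∀ n, (X \ Y n).Finite := by
    intro n
    apply Set.Finite.subset (Set.finite_Iic (∑ i ∈ Fn n, i))
    intro x hx
    have : ¬ (∀ a ∈ Fn n, a < x) := fun h => hx.2 ⟨hx.1, h⟩
    push_neg at this
    obtain ⟨a, haFn, hax⟩ := this
    have : a ≤ ∑ i ∈ Fn n, i := Finset.single_le_sum (fun i _ => Nat.zero_le i) haFn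
    exact Set.mem_Iic.2 (by omega)
  -- the set where addition is injective
  set S : Set (ℕ × ℕ) :=
    {p | p.1 ∈ A ∧ p.1 ∈ FS X ∧ p.2 ∈ B p.1 ∧ p.2 ∈ FS (Y p.1)} with hSdef
  have hS : S ∈ BFsum u v := by
    rw [mem_BFsum]
    apply Filter.mem_of_superset (Filter.inter_mem hAu (hu.2 X subset_rfl (by simp)))
    rintro n ⟨hnA, hnFS⟩
    have h1 : B n ∩ FS (Y n) ∈ v n :=
      Filter.inter_mem (hBv n) ((hv n).2 (Y n) (hYsub n) (hYcof n))
    apply Filter.mem_of_superset h1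
    rintro m ⟨hm1, hm2⟩
    exact ⟨hnA, hnFS, hm1, hm2⟩
  -- injectivity of addition on S
  have hinj : ∀ p ∈ S, ∀ q ∈ S, p.1 + p.2 = q.1 + q.2 → p = q := by
    rintro ⟨n, m⟩ ⟨hnA, hnFS, hmB, hmFS⟩ ⟨n', m'⟩ ⟨hn'A, hn'FS, hm'B, hm'FS⟩ heq
    obtain ⟨hFne, hFX, hFsum⟩ := hFn n hnFS
    obtain ⟨hF'ne, hF'X, hF'sum⟩ := hFn n' hn'FS
    obtain ⟨G, hGne, hGsub, hGsum⟩ := hmFS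
    obtain ⟨G', hG'ne, hG'sub, hG'sum⟩ := hm'FS
    have hG : ∀ x ∈ G, x ∈ X ∧ ∀ a ∈ Fn n, a < x := fun x hx => hGsub hx
    have hG' : ∀ x ∈ G', x ∈ X ∧ ∀ a ∈ Fn n', a < x := fun x hx => hG'sub hx
    have hkey : (∑ i ∈ Fn n, i) = ∑ i ∈ Fn n', i := by
      apply key X hX hXinf hAadq hFX hF'X hFne hF'ne hGne hG'ne hG hG'
        (hFsum ▸ hnA) (hF'sum ▸ hn'A)
      rw [← hFsum, ← hGsum, ← hF'sum, ← hG'sum]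
      exact heq
    have hnn' : n = n' := by rw [hFsum, hF'sum, hkey]
    have hmm' : m = m' := by omega
    simp [hnn', hmm']
  refine ⟨⟨fun q => q.1 + q.2, rfl⟩, ?_⟩
  -- the inverse map
  set g : ℕ → ℕ × ℕ := fun s =>
    if h : ∃ p, p ∈ S ∧ p.1 + p.2 = s then h.choose else (0, 0) with hgdef
  refine ⟨g, ?_⟩
  rw [indexedSum, Ultrafilter.map_map]
  have hgf : {p : ℕ × ℕ | (g ∘ fun q => q.1 + q.2) p = p} ∈ BFsum u v := by
    apply Filter.mem_of_superset hS
    intro p hp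
    have hex : ∃ q : ℕ × ℕ, q ∈ S ∧ q.1 + q.2 = p.1 + p.2 := ⟨p, hp, rfl⟩
    simp only [Set.mem_setOf_eq, Function.comp_apply, hgdef, dif_pos hex]
    exact hinj _ hex.choose_spec.1 p hp hex.choose_spec.2
  apply Ultrafilter.coe_injective
  rw [Ultrafilter.coe_map]
  have : (g ∘ fun q : ℕ × ℕ => q.1 + q.2) =ᶠ[↑(BFsum u v)] id := hgf
  rw [Filter.map_congr this, Filter.map_id]
end

section
/- Let X ⊆ ℕ be a set with uniqueness of sums, and let p be an X-adequate ultrafilter on ℕ. Then every element u of the family 𝓕^p generates a free subsemigroup: for all n, m ≥ 1, u^n = u^m implies n = m. -/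
/-!
Write an element `a = x₁ + ⋯ + xₖ` of `FS X`, with `x₁ < ⋯ < xₖ` in `X`, as the word
`[x₁, …, xₖ]`; by uniqueness of sums the word is determined by `a`. Adequacy says that the
words of an adequate set form a prefix code `L` with `wordSums X L ∈ p`. Every `u ∈ 𝓕^p`
contains `FS` of every tail of `X`, so summing `u` and `v n` concatenates words, and the codes
of `u` and of the `v n` combine into a prefix code for `⊕_u v n`. Hence every `u ∈ 𝓕^p` is
carried by the sums of a prefix code `L`, and then `u^n` by the sums of the words of `L^n`.
A prefix code factors words uniquely, so the languages `L^n` are pairwise disjoint and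
`u^n = u^m` forces `n = m`.
-/

open Filter

attribute [local instance] Ultrafilter.add Ultrafilter.addSemigroup

/-- `InF p` is the smallest family of ultrafilters on `ℕ` containing `p` and closed under
indexed sums `⊕`. -/
inductive InF (p : Ultrafilter ℕ) : Ultrafilter ℕ → Prop
  | base : InF p p
  | isum (u : Ultrafilter ℕ) (v : ℕ → Ultrafilter ℕ) :
      InF p u → (∀ n, InF p (v n)) → InF p (indexedSum u v)


namespace Language

variable {α : Type*} {L : Language α}

def IsPrefixCode (L : Language α) : Prop :=
  [] ∉ L ∧ ∀ a ∈ L, ∀ b ∈ L, a <+: b → a = b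

theorem IsPrefixCode.eq_of_prefix_of_prefix (hL : L.IsPrefixCode) {a b w : List α}
    (ha : a ∈ L) (hb : b ∈ L) (haw : a <+: w) (hbw : b <+: w) : a = b :=
  (List.prefix_or_prefix_of_prefix haw hbw).elim (hL.2 a ha b hb) fun h =>
    (hL.2 b hb a ha h).symm

theorem IsPrefixCode.flatten_inj (hL : L.IsPrefixCode) {S S' : List (List α)}
    (hS : ∀ a ∈ S, a ∈ L) (hS' : ∀ a ∈ S', a ∈ L) (h : S.flatten = S'.flatten) : S = S' := by
  induction S generalizing S' with
  | nil =>
    cases S' with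
    | nil => rfl
    | cons b S' =>
      have hb : b = [] := (List.append_eq_nil_iff.1 h.symm).1
      exact absurd (hb ▸ hS' b List.mem_cons_self) hL.1
  | cons a S ih =>
    cases S' with
    | nil => exact absurd ((List.append_eq_nil_iff.1 h).1 ▸ hS a List.mem_cons_self) hL.1
    | cons b S' =>
      rw [List.forall_mem_cons] at hS hS'
      rw [List.flatten_cons, List.flatten_cons] at h
      have hab : a = b := hL.eq_of_prefix_of_prefix hS.1 hS'.1 (List.prefix_append _ _)
        (by rw [h]; exact List.prefix_append _ _)
      subst hab
      rw [ih hS.2 hS'.2 (List.append_cancel_left h)]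

theorem IsPrefixCode.eq_of_mem_pow (hL : L.IsPrefixCode) {w : List α} {n m : ℕ}
    (hn : w ∈ L ^ n) (hm : w ∈ L ^ m) : n = m := by
  obtain ⟨S, rfl, rfl, hS⟩ := mem_pow.1 hn
  obtain ⟨S', hSS', rfl, hS'⟩ := mem_pow.1 hm
  rw [hL.flatten_inj hS hS' hSS']

theorem IsPrefixCode.sigma_append {V : List α → Language α} (hL : L.IsPrefixCode)
    (hV : ∀ a ∈ L, (V a).IsPrefixCode) :
    IsPrefixCode {w | ∃ a ∈ L, ∃ b ∈ V a, a ++ b = w} := by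
  refine ⟨?_, ?_⟩
  · rintro ⟨a, ha, b, -, hab⟩
    exact hL.1 ((List.append_eq_nil_iff.1 hab).1 ▸ ha)
  · rintro _ ⟨a, ha, b, hb, rfl⟩ _ ⟨a', ha', b', hb', rfl⟩ h
    obtain rfl : a = a' := hL.eq_of_prefix_of_prefix ha ha'
      ((List.prefix_append a b).trans h) (List.prefix_append a' b')
    rw [(hV a ha).2 b hb b' hb' ((List.prefix_append_right_inj a).1 h)]

end Language

theorem Finset.sum_sort {α : Type*} [LinearOrder α] [AddCommMonoid α] (s : Finset α) :
    s.sort.sum = ∑ i ∈ s, i := by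
  rw [Finset.sum_eq_multiset_sum, Multiset.map_id', ← Finset.sort_eq s (· ≤ ·),
    Multiset.sum_coe]

theorem Finset.sort_injective {α : Type*} [LinearOrder α] :
    Function.Injective (fun s : Finset α => s.sort) := fun s t h => by
  simpa only [Finset.sort_toFinset] using congrArg List.toFinset h

theorem Finset.sort_union_of_lt {α : Type*} [LinearOrder α] {s t : Finset α}
    (h : ∀ x ∈ s, ∀ y ∈ t, x < y) : (s ∪ t).sort = s.sort ++ t.sort := by
  refine (Finset.sortedLT_sort _).pairwise.eq_of_mem_iff ?_ fun a => by simp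
  exact List.pairwise_append.2 ⟨(Finset.sortedLT_sort _).pairwise,
    (Finset.sortedLT_sort _).pairwise,
    fun a ha b hb => h a (by simpa using ha) b (by simpa using hb)⟩

theorem FS_mono {Y Z : Set ℕ} (h : Y ⊆ Z) : FS Y ⊆ FS Z := by
  rintro _ ⟨F, hFne, hFY, rfl⟩
  exact ⟨F, hFne, hFY.trans h, rfl⟩

theorem lt_of_mem_of_sum_lt {F G : Finset ℕ} {Y : Set ℕ}
    (hG : ↑G ⊆ {x | x ∈ Y ∧ ∑ i ∈ F, i < x}) :
    ∀ x ∈ F, ∀ y ∈ G, x < y := fun _ hx _ hy =>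
  (Finset.single_le_sum (fun i _ => Nat.zero_le i) hx).trans_lt (hG hy).2

theorem add_mem_FS {Y : Set ℕ} {n m : ℕ} (hn : n ∈ FS Y) (hm : m ∈ FS {x | x ∈ Y ∧ n < x}) :
    n + m ∈ FS Y := by
  obtain ⟨F, hFne, hFY, rfl⟩ := hn
  obtain ⟨G, hGne, hGY, rfl⟩ := hm
  have hdisj : Disjoint F G := Finset.disjoint_left.2 fun a haF haG =>
    lt_irrefl a (lt_of_mem_of_sum_lt hGY a haF a haG)
  refine ⟨F ∪ G, hFne.mono Finset.subset_union_left, ?_, (Finset.sum_union hdisj).symm⟩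
  rw [Finset.coe_union]
  exact Set.union_subset hFY fun y hy => (hGY hy).1

def wordSums (X : Set ℕ) (L : Language ℕ) : Set ℕ :=
  {a | ∃ F : Finset ℕ, ↑F ⊆ X ∧ F.Nonempty ∧ F.sort ∈ L ∧ ∑ i ∈ F, i = a}

theorem wordSums_mono {X : Set ℕ} {L L' : Language ℕ} (h : L ≤ L') :
    wordSums X L ⊆ wordSums X L' := by
  rintro _ ⟨F, hFX, hFne, hFL, rfl⟩
  exact ⟨F, hFX, hFne, h hFL, rfl⟩

theorem sum_add_mem_wordSums {X : Set ℕ} (hX : UniquenessOfSums X) {L : Language ℕ}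
    {F : Finset ℕ} (hFX : ↑F ⊆ X) (hFne : F.Nonempty) {m : ℕ} (hm : m ∈ wordSums X L)
    (hm' : m ∈ FS {x | x ∈ X ∧ ∑ i ∈ F, i < x}) :
    ∑ i ∈ F, i + m ∈ wordSums X ({F.sort} * L) := by
  obtain ⟨G, hGX, hGne, hGL, rfl⟩ := hm
  obtain ⟨G', hG'ne, hG'X, hGG'⟩ := hm'
  obtain rfl : G = G' := hX G G' hGX (hG'X.trans fun x hx => hx.1) hGne hG'ne hGG'
  have hFG := lt_of_mem_of_sum_lt hG'X
  have hdisj : Disjoint F G :=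
    Finset.disjoint_left.2 fun a haF haG => lt_irrefl a (hFG a haF a haG)
  refine ⟨F ∪ G, ?_, hFne.mono Finset.subset_union_left, ?_, Finset.sum_union hdisj⟩
  · rw [Finset.coe_union]
    exact Set.union_subset hFX hGX
  · rw [Finset.sort_union_of_lt hFG]
    exact Language.mem_mul.2 ⟨_, rfl, _, hGL, rfl⟩

theorem Ultrafilter.mem_add_iff {U V : Ultrafilter ℕ} {s : Set ℕ} :
    s ∈ U + V ↔ {n | {m | n + m ∈ s} ∈ V} ∈ U :=
  Ultrafilter.eventually_add U V (· ∈ s)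

theorem mem_indexedSum_iff {u : Ultrafilter ℕ} {v : ℕ → Ultrafilter ℕ} {s : Set ℕ} :
    s ∈ indexedSum u v ↔ {n | {m | n + m ∈ s} ∈ v n} ∈ u :=
  Iff.rfl

def HasFSTails (X : Set ℕ) (u : Ultrafilter ℕ) : Prop :=
  ∀ k, FS {x | x ∈ X ∧ k < x} ∈ u

theorem IsAdequateUltrafilter.hasFSTails {X : Set ℕ} {p : Ultrafilter ℕ}
    (hp : IsAdequateUltrafilter X p) : HasFSTails X p := fun k =>
  hp.2 _ (fun _ hx => hx.1)
    ((Set.finite_Iic k).subset fun _ hx => not_lt.1 fun h => hx.2 ⟨hx.1, h⟩)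

theorem HasFSTails.indexedSum {X : Set ℕ} {u : Ultrafilter ℕ} {v : ℕ → Ultrafilter ℕ}
    (hu : HasFSTails X u) (hv : ∀ n, HasFSTails X (v n)) : HasFSTails X (indexedSum u v) := by
  intro k
  refine mem_indexedSum_iff.2 (Filter.mem_of_superset (hu k) fun n hn => ?_)
  refine Filter.mem_of_superset (hv n (k + n)) fun m hm => add_mem_FS hn (FS_mono ?_ hm)
  rintro x ⟨hxX, hx⟩
  exact ⟨⟨hxX, by omega⟩, by omega⟩

theorem InF.hasFSTails {X : Set ℕ} {p u : Ultrafilter ℕ} (hp : HasFSTails X p) (hu : InF p u) :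
    HasFSTails X u := by
  induction hu with
  | base => exact hp
  | isum u v _ _ ihu ihv => exact ihu.indexedSum ihv

theorem exists_strictMono_sum_nth_eq_sum_take (X : Set ℕ) {l : List ℕ}
    (hl : l.Pairwise (· < ·)) (hlX : ∀ x ∈ l, x ∈ X) :
    ∃ g : ℕ → ℕ, StrictMono g ∧
      ∀ s ≤ l.length, ∑ k ∈ Finset.range s, Nat.nth (· ∈ X) (g k) = (l.take s).sum := by
  classical
  let g : ℕ → ℕ := fun k => if h : k < l.length then Nat.count (· ∈ X) l[k] else l.sum + k
  have hg : ∀ k (hk : k < l.length), Nat.nth (· ∈ X) (g k) = l[k] := fun k hk => by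
    simp only [g, dif_pos hk]
    exact Nat.nth_count (hlX _ (List.getElem_mem hk))
  refine ⟨g, fun a b hab => ?_, fun s hs => ?_⟩
  · by_cases hb : b < l.length
    · simp only [g, dif_pos hb, dif_pos (hab.trans hb)]
      exact Nat.count_strict_mono (hlX _ (List.getElem_mem _))
        (List.pairwise_iff_getElem.1 hl a b (hab.trans hb) hb hab)
    · by_cases ha : a < l.length
      · simp only [g, dif_pos ha, dif_neg hb]
        have := List.le_sum_of_mem (List.getElem_mem ha)
        have := Nat.count_le (p := (· ∈ X)) (n := l[a])
        omega
      · simp only [g, dif_neg ha, dif_neg hb]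
        omega
  · induction s with
    | zero => simp
    | succ s ih =>
      rw [Finset.sum_range_succ, ih (by omega), List.sum_take_succ _ _ (by omega),
        hg s (by omega)]

theorem IsAdequateSet.eq_of_sort_prefix {X A : Set ℕ} (hA : IsAdequateSet X A)
    {F G : Finset ℕ} (hGX : ↑G ⊆ X) (hFne : F.Nonempty) (hFA : ∑ i ∈ F, i ∈ A)
    (hGA : ∑ i ∈ G, i ∈ A) (hFG : F.sort <+: G.sort) : F = G := by
  obtain ⟨g, hg, hsum⟩ := exists_strictMono_sum_nth_eq_sum_take X
    (Finset.sortedLT_sort G).pairwise fun x hx => hGX (Finset.mem_sort _ |>.1 hx)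
  -- `F` and `G` are initial segments of one subsequence of `X`, so adequacy forces `|F| = |G|`.
  have hpartial : ∀ H : Finset ℕ, H.Nonempty → H.sort <+: G.sort →
      ∑ k ∈ Finset.range (H.card - 1 + 1), Nat.nth (· ∈ X) (g k) = ∑ i ∈ H, i := by
    intro H hHne hHG
    have hlen := hHG.length_le
    rw [Finset.length_sort] at hlen
    rw [Nat.sub_add_cancel (Finset.card_pos.2 hHne), hsum _ (by simpa using hlen),
      ← Finset.length_sort (· ≤ ·), ← List.prefix_iff_eq_take.1 hHG, Finset.sum_sort]
  have hcard : F.card ≤ G.card := by simpa using hFG.length_le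
  have hGne : G.Nonempty := Finset.card_pos.1 ((Finset.card_pos.2 hFne).trans_le hcard)
  have hm : F.card - 1 = G.card - 1 := (hA.2 g hg).unique
    (by rwa [hpartial F hFne hFG]) (by rwa [hpartial G hGne List.prefix_rfl])
  refine Finset.sort_injective (hFG.eq_of_length ?_)
  simp only [Finset.length_sort]
  have := Finset.card_pos.2 hFne
  omega

theorem IsAdequateUltrafilter.exists_prefixCode {X : Set ℕ} {p : Ultrafilter ℕ}
    (hp : IsAdequateUltrafilter X p) : ∃ L : Language ℕ, L.IsPrefixCode ∧ wordSums X L ∈ p := by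
  obtain ⟨⟨A, hAp, hA⟩, -⟩ := hp
  refine ⟨{w | ∃ F : Finset ℕ, ↑F ⊆ X ∧ F.Nonempty ∧ ∑ i ∈ F, i ∈ A ∧ F.sort = w},
    ⟨?_, ?_⟩, ?_⟩
  · rintro ⟨F, -, hFne, -, hF⟩
    exact hFne.ne_empty (Finset.sort_injective (hF.trans (Finset.sort_empty _).symm))
  · rintro _ ⟨F, -, hFne, hFA, rfl⟩ _ ⟨G, hGX, -, hGA, rfl⟩ hFG
    rw [hA.eq_of_sort_prefix hGX hFne hFA hGA hFG]
  · refine Filter.mem_of_superset hAp fun a ha => ?_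
    obtain ⟨F, hFne, hFX, rfl⟩ := hA.1 ha
    exact ⟨F, hFX, hFne, ⟨F, hFX, hFne, ha, rfl⟩, rfl⟩

theorem wordSums_sigma_append_mem_indexedSum {X : Set ℕ} (hX : UniquenessOfSums X)
    {u : Ultrafilter ℕ} {v : ℕ → Ultrafilter ℕ} {L : Language ℕ} {V : ℕ → Language ℕ}
    (hv : ∀ n, HasFSTails X (v n)) (hLu : wordSums X L ∈ u)
    (hVv : ∀ n, wordSums X (V n) ∈ v n) :
    wordSums X {w | ∃ a ∈ L, ∃ b ∈ V a.sum, a ++ b = w} ∈ indexedSum u v := by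
  refine mem_indexedSum_iff.2 (Filter.mem_of_superset hLu ?_)
  rintro _ ⟨F, hFX, hFne, hFL, rfl⟩
  refine Filter.mem_of_superset (Filter.inter_mem (hVv _) (hv _ (∑ i ∈ F, i))) fun m hm => ?_
  refine wordSums_mono ?_ (sum_add_mem_wordSums hX hFX hFne hm.1 hm.2)
  rintro _ ⟨_, rfl, b, hb, rfl⟩
  exact ⟨F.sort, hFL, b, by rwa [Finset.sum_sort], rfl⟩

theorem InF.exists_prefixCode {X : Set ℕ} (hX : UniquenessOfSums X) {p u : Ultrafilter ℕ}
    (hp : IsAdequateUltrafilter X p) (hu : InF p u) :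
    ∃ L : Language ℕ, L.IsPrefixCode ∧ wordSums X L ∈ u := by
  induction hu with
  | base => exact hp.exists_prefixCode
  | isum u v _ hv ihu ihv =>
    obtain ⟨L, hL, hLu⟩ := ihu
    choose V hV hVv using ihv
    exact ⟨_, hL.sigma_append fun a _ => hV a.sum, wordSums_sigma_append_mem_indexedSum hX
      (fun n => (hv n).hasFSTails hp.hasFSTails) hLu hVv⟩

theorem wordSums_pow_mem_sumPow {X : Set ℕ} (hX : UniquenessOfSums X) {u : Ultrafilter ℕ}
    (hu : HasFSTails X u) {L : Language ℕ} (hLu : wordSums X L ∈ u) (n : ℕ) :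
    wordSums X (L ^ (n + 1)) ∈ sumPow u (n + 1) := by
  induction n with
  | zero => rwa [zero_add, pow_one]
  | succ n ih =>
    refine Ultrafilter.mem_add_iff.2 (Filter.mem_of_superset ih ?_)
    rintro _ ⟨F, hFX, hFne, hFL, rfl⟩
    refine Filter.mem_of_superset (Filter.inter_mem hLu (hu (∑ i ∈ F, i))) fun m hm => ?_
    refine wordSums_mono ?_ (sum_add_mem_wordSums hX hFX hFne hm.1 hm.2)
    rw [pow_succ L (n + 1)]
    exact mul_le_mul_left (show ({F.sort} : Language ℕ) ≤ L ^ (n + 1) from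
      Set.singleton_subset_iff.2 hFL) L

theorem Language.IsPrefixCode.eq_of_mem_wordSums_pow {X : Set ℕ} (hX : UniquenessOfSums X)
    {L : Language ℕ} (hL : L.IsPrefixCode) {a n m : ℕ} (hn : a ∈ wordSums X (L ^ n))
    (hm : a ∈ wordSums X (L ^ m)) : n = m := by
  obtain ⟨F, hFX, hFne, hFL, rfl⟩ := hn
  obtain ⟨G, hGX, hGne, hGL, hGF⟩ := hm
  obtain rfl := hX G F hGX hFX hGne hFne hGF
  exact hL.eq_of_mem_pow hFL hGL

/-- If `X` has uniqueness of sums and `p` is an `X`-adequate ultrafilter, then every element `u`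
of `𝓕^p` generates a free subsemigroup: `u^n = u^m → n = m` for `n, m ≥ 1`. -/
theorem statement8 (X : Set ℕ) (hX : UniquenessOfSums X)
    (p : Ultrafilter ℕ) (hp : IsAdequateUltrafilter X p) :
    ∀ u : Ultrafilter ℕ, InF p u →
      ∀ n m : ℕ, 1 ≤ n → 1 ≤ m → sumPow u n = sumPow u m → n = m := by
  intro u hu n m hn hm hnm
  obtain ⟨L, hL, hLu⟩ := hu.exists_prefixCode hX hp
  have hpow := wordSums_pow_mem_sumPow hX (hu.hasFSTails hp.hasFSTails) hLu
  obtain ⟨n, rfl⟩ : ∃ k, n = k + 1 := ⟨n - 1, by omega⟩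
  obtain ⟨m, rfl⟩ : ∃ k, m = k + 1 := ⟨m - 1, by omega⟩
  obtain ⟨a, han, ham⟩ := Filter.nonempty_of_mem (Filter.inter_mem (hnm ▸ hpow n) (hpow m))
  exact hL.eq_of_mem_wordSums_pow hX han ham
end

section
/- Let p be a Q-point on ω. Then every element u of the family 𝓕^p generates a free subsemigroup: for all n, m ≥ 1, u^n = u^m implies n = m. In particular, no element of 𝓕^p is an idempotent ultrafilter. -/
open Filter

attribute [local instance] Ultrafilter.add Ultrafilter.addSemigroup

/-- A Q-point: a nonprincipal ultrafilter `p` on `ℕ` such that for every partition of `ℕ` into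
finite sets there is `A ∈ p` meeting each piece in at most one point. -/
def IsQPoint (p : Ultrafilter ℕ) : Prop :=
  (∀ n : ℕ, p ≠ pure n) ∧
    ∀ F : ℕ → Set ℕ, (∀ n, (F n).Finite) →
      (Pairwise (Function.onFun Disjoint F)) → (⋃ n, F n) = Set.univ →
        ∃ A ∈ p, ∀ n, (A ∩ F n).Subsingleton

namespace Statement9Aux

/-! ### Basic membership lemmas -/

lemma mem_add {U V : Ultrafilter ℕ} {s : Set ℕ} :
    s ∈ U + V ↔ {x | {y | x + y ∈ s} ∈ V} ∈ U := Iff.rfl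

lemma mem_indexedSum {u : Ultrafilter ℕ} {v : ℕ → Ultrafilter ℕ} {s : Set ℕ} :
    s ∈ indexedSum u v ↔ {n | {m | n + m ∈ s} ∈ v n} ∈ u := Iff.rfl

lemma gt_mem (p : Ultrafilter ℕ) (hpure : ∀ n : ℕ, p ≠ pure n) (t : ℕ) :
    {x : ℕ | t < x} ∈ p := by
  by_contra h
  have hc : {x : ℕ | t < x}ᶜ ∈ p := Ultrafilter.compl_mem_iff_notMem.mpr h
  have hfin : ({x : ℕ | t < x}ᶜ).Finite := by
    apply (Set.finite_le_nat t).subset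
    intro x hx
    simpa using hx
  obtain ⟨x, _, hx⟩ := Ultrafilter.eq_pure_of_finite_mem hfin hc
  exact hpure x hx

/-! ### Super-increasing sets and unique decodability -/

/-- A set `A ⊆ ℕ` is super-increasing if any finite subset of `A` below an element `y ∈ A`
has total sum `< y`. -/
def Sup (A : Set ℕ) : Prop :=
  ∀ y ∈ A, ∀ I : Finset ℕ, ↑I ⊆ A → (∀ i ∈ I, i < y) → I.sum id < y

lemma Sup.pos {A : Set ℕ} (hA : Sup A) {y : ℕ} (hy : y ∈ A) : 0 < y := by
  have := hA y hy ∅ (by simp) (by simp)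
  simpa using this

lemma rep_unique {A : Set ℕ} (hA : Sup A) :
    ∀ z (I J : Finset ℕ), ↑I ⊆ A → ↑J ⊆ A → I.sum id = z → J.sum id = z → I = J := by
  intro z
  induction z using Nat.strong_induction_on with
  | _ z ih =>
    intro I J hI hJ hIz hJz
    rcases I.eq_empty_or_nonempty with rfl | hIne
    · rcases J.eq_empty_or_nonempty with rfl | hJne
      · rfl
      · exfalso
        obtain ⟨j, hj⟩ := hJne
        have hjpos : 0 < j := hA.pos (hJ hj)
        have hle : j ≤ J.sum id := by
          simpa using Finset.single_le_sum (f := id) (fun i _ => Nat.zero_le (id i)) hj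
        simp only [Finset.sum_empty] at hIz
        omega
    rcases J.eq_empty_or_nonempty with rfl | hJne
    · exfalso
      obtain ⟨i, hi⟩ := hIne
      have hipos : 0 < i := hA.pos (hI hi)
      have hle : i ≤ I.sum id := by
        simpa using Finset.single_le_sum (f := id) (fun i _ => Nat.zero_le (id i)) hi
      simp only [Finset.sum_empty] at hJz
      omega
    · set M₁ := I.max' hIne with hM₁
      set M₂ := J.max' hJne with hM₂
      have hM₁I : M₁ ∈ I := I.max'_mem hIne
      have hM₂J : M₂ ∈ J := J.max'_mem hJne
      have hMM : M₁ = M₂ := by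
        rcases lt_trichotomy M₁ M₂ with h | h | h
        · exfalso
          have h1 : I.sum id < M₂ :=
            hA M₂ (hJ hM₂J) I hI (fun i hi => lt_of_le_of_lt (I.le_max' i hi) h)
          have h2 : M₂ ≤ J.sum id := by
            simpa using Finset.single_le_sum (f := id) (fun i _ => Nat.zero_le (id i)) hM₂J
          omega
        · exact h
        · exfalso
          have h1 : J.sum id < M₁ :=
            hA M₁ (hI hM₁I) J hJ (fun j hj => lt_of_le_of_lt (J.le_max' j hj) h)
          have h2 : M₁ ≤ I.sum id := by
            simpa using Finset.single_le_sum (f := id) (fun i _ => Nat.zero_le (id i)) hM₁I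
          omega
      have e1 : (I.erase M₁).sum id + M₁ = z := by
        have h : (I.erase M₁).sum id + M₁ = I.sum id := by
          simpa using Finset.sum_erase_add I id hM₁I
        omega
      have e2 : (J.erase M₂).sum id + M₂ = z := by
        have h : (J.erase M₂).sum id + M₂ = J.sum id := by
          simpa using Finset.sum_erase_add J id hM₂J
        omega
      have hM₁pos : 0 < M₁ := hA.pos (hI hM₁I)
      have hlt : (I.erase M₁).sum id < z := by omega
      have heq : I.erase M₁ = J.erase M₂ := by
        apply ih _ hlt
        · exact fun x hx => hI (Finset.erase_subset _ _ hx)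
        · exact fun x hx => hJ (Finset.erase_subset _ _ hx)
        · rfl
        · omega
      have : insert M₁ (I.erase M₁) = insert M₂ (J.erase M₂) := by rw [heq, hMM]
      rwa [Finset.insert_erase hM₁I, Finset.insert_erase hM₂J] at this

/-- The set of sums of finite nonempty subsets of `A` all of whose elements exceed `t`. -/
def Dset (A : Set ℕ) (t : ℕ) : Set ℕ :=
  {z | ∃ I : Finset ℕ, ↑I ⊆ A ∧ I.Nonempty ∧ (∀ i ∈ I, t < i) ∧ I.sum id = z}

/-- `I` is an initial part of `J` (all of `J ∖ I` lies above all of `I`). -/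
def Initial (I J : Finset ℕ) : Prop :=
  I ⊆ J ∧ ∀ i ∈ I, ∀ j ∈ J, j ∉ I → i < j

/-- Prefix-freeness of `B` with respect to `A`-representations. -/
def PF (A B : Set ℕ) : Prop :=
  ∀ I J : Finset ℕ, ↑I ⊆ A → ↑J ⊆ A → I.Nonempty →
    I.sum id ∈ B → J.sum id ∈ B → Initial I J → I = J

lemma initial_nested {I J K : Finset ℕ} (hIK : Initial I K) (hJK : Initial J K) :
    I ⊆ J ∨ J ⊆ I := by
  by_contra h
  push_neg at h
  obtain ⟨h1, h2⟩ := h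
  obtain ⟨i, hiI, hiJ⟩ := Finset.not_subset.mp h1
  obtain ⟨j, hjJ, hjI⟩ := Finset.not_subset.mp h2
  have l1 := hIK.2 i hiI j (hJK.1 hjJ) hjI
  have l2 := hJK.2 j hjJ i (hIK.1 hiI) hiJ
  omega

lemma initial_trans {I J K : Finset ℕ} (hIJ : Initial I J) (hJK : Initial J K) :
    Initial I K := by
  refine ⟨hIJ.1.trans hJK.1, ?_⟩
  intro i hi j hjK hjI
  by_cases hjJ : j ∈ J
  · exact hIJ.2 i hi j hjJ hjI
  · exact hJK.2 i (hIJ.1 hi) j hjK hjJ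

/-! ### Decompositions into blocks -/

inductive Decomp (B : Set ℕ) : Finset ℕ → ℕ → Prop
  | single (J : Finset ℕ) (hne : J.Nonempty) (hB : J.sum id ∈ B) : Decomp B J 1
  | cons (J K : Finset ℕ) (k : ℕ) (h : Decomp B J k) (hne : K.Nonempty)
      (hB : K.sum id ∈ B) (hlt : ∀ i ∈ J, ∀ j ∈ K, i < j) : Decomp B (J ∪ K) (k + 1)

lemma Decomp.nonempty {B : Set ℕ} {J : Finset ℕ} {k : ℕ} (h : Decomp B J k) : J.Nonempty := by
  induction h with
  | single J hne _ => exact hne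
  | cons J K k _ hne _ _ ih =>
    obtain ⟨x, hx⟩ := ih
    exact ⟨x, Finset.mem_union_left _ hx⟩

lemma Decomp.peel {B : Set ℕ} {J : Finset ℕ} {k : ℕ} (h : Decomp B J k) :
    ∃ I : Finset ℕ, I.Nonempty ∧ I.sum id ∈ B ∧ Initial I J ∧
      ((k = 1 ∧ I = J) ∨ ∃ k', k = k' + 1 ∧ 1 ≤ k' ∧ Decomp B (J \ I) k') := by
  induction h with
  | single J hne hB =>
    exact ⟨J, hne, hB, ⟨subset_rfl, fun i hi j hj hjI => absurd hj hjI⟩, Or.inl ⟨rfl, rfl⟩⟩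
  | cons J K k hd hne hB hlt ih =>
    obtain ⟨I, hIne, hIB, hInit, hrest⟩ := ih
    have hIJ : I ⊆ J := hInit.1
    have hInit' : Initial I (J ∪ K) := by
      refine ⟨hIJ.trans Finset.subset_union_left, ?_⟩
      intro i hi j hj hjI
      rcases Finset.mem_union.mp hj with hjJ | hjK
      · exact hInit.2 i hi j hjJ hjI
      · exact hlt i (hIJ hi) j hjK
    refine ⟨I, hIne, hIB, hInit', Or.inr ?_⟩
    rcases hrest with ⟨hk1, rfl⟩ | ⟨k', rfl, hk'1, hd'⟩
    · refine ⟨1, by omega, le_refl 1, ?_⟩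
      have hJK : (I ∪ K) \ I = K := by
        ext x
        simp only [Finset.mem_sdiff, Finset.mem_union]
        constructor
        · rintro ⟨h1 | h1, h2⟩
          · exact absurd h1 h2
          · exact h1
        · intro hx
          exact ⟨Or.inr hx, fun hxI => absurd (hlt x hxI x hx) (lt_irrefl x)⟩
      rw [hJK]
      exact Decomp.single K hne hB
    · refine ⟨k' + 1, rfl, by omega, ?_⟩
      have hIK : ∀ x ∈ K, x ∉ I := by
        intro x hxK hxI
        exact absurd (hlt x (hIJ hxI) x hxK) (lt_irrefl x)
      have hset : (J ∪ K) \ I = (J \ I) ∪ K := by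
        ext x
        simp only [Finset.mem_sdiff, Finset.mem_union]
        constructor
        · rintro ⟨h1 | h1, h2⟩
          · exact Or.inl ⟨h1, h2⟩
          · exact Or.inr h1
        · rintro (⟨h1, h2⟩ | h1)
          · exact ⟨Or.inl h1, h2⟩
          · exact ⟨Or.inr h1, hIK x h1⟩
      rw [hset]
      refine Decomp.cons _ _ _ hd' hne hB ?_
      intro i hi j hj
      exact hlt i (Finset.mem_sdiff.mp hi).1 j hj

lemma decomp_decode {A B : Set ℕ} (hA : Sup A) (hPF : PF A B) :
    ∀ n (J : Finset ℕ), ↑J ⊆ A → Decomp B J n → ∀ m, Decomp B J m → n = m := by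
  intro n
  induction n using Nat.strong_induction_on with
  | _ n ih =>
    intro J hJA h1 m h2
    obtain ⟨I1, hI1ne, hI1B, hInit1, hrest1⟩ := h1.peel
    obtain ⟨I2, hI2ne, hI2B, hInit2, hrest2⟩ := h2.peel
    have hI1A : ↑I1 ⊆ A := fun x hx => hJA (hInit1.1 hx)
    have hI2A : ↑I2 ⊆ A := fun x hx => hJA (hInit2.1 hx)
    have hI12 : I1 = I2 := by
      rcases initial_nested hInit1 hInit2 with hsub | hsub
      · refine hPF I1 I2 hI1A hI2A hI1ne hI1B hI2B ⟨hsub, ?_⟩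
        intro i hi j hj hjI
        exact hInit1.2 i hi j (hInit2.1 hj) hjI
      · refine (hPF I2 I1 hI2A hI1A hI2ne hI2B hI1B ⟨hsub, ?_⟩).symm
        intro i hi j hj hjI
        exact hInit2.2 i hi j (hInit1.1 hj) hjI
    subst hI12
    rcases hrest1 with ⟨hn1, rfl⟩ | ⟨n', rfl, hn', hd1⟩
    · rcases hrest2 with ⟨hm1, _⟩ | ⟨m', rfl, hm', hd2⟩
      · omega
      · exfalso
        have := hd2.nonempty
        simp at this
    · rcases hrest2 with ⟨hm1, heq⟩ | ⟨m', rfl, hm', hd2⟩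
      · exfalso
        rw [← heq] at hd1
        have := hd1.nonempty
        simp at this
      · have hsub : ↑(J \ I1) ⊆ A := fun x hx => hJA (Finset.sdiff_subset hx)
        have : n' = m' := ih n' (by omega) (J \ I1) hsub hd1 m' hd2
        omega

/-! ### The main induction over `InF` -/

lemma sum_union_mem_Dset {A : Set ℕ} {t : ℕ} {I K : Finset ℕ}
    (hIA : ↑I ⊆ A) (hKA : ↑K ⊆ A) (hIne : I.Nonempty)
    (hIt : ∀ i ∈ I, t < i) (hKt : ∀ j ∈ K, I.max' hIne < j) :
    ↑(I ∪ K) ⊆ A ∧ (I ∪ K).Nonempty ∧ (∀ i ∈ I ∪ K, t < i) ∧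
      (I ∪ K).sum id = I.sum id + K.sum id := by
  have hdisj : Disjoint I K := by
    rw [Finset.disjoint_left]
    intro x hxI hxK
    exact absurd (lt_of_le_of_lt (I.le_max' x hxI) (hKt x hxK)) (lt_irrefl x)
  refine ⟨?_, ?_, ?_, ?_⟩
  · rw [Finset.coe_union]
    exact Set.union_subset hIA hKA
  · obtain ⟨x, hx⟩ := hIne
    exact ⟨x, Finset.mem_union_left _ hx⟩
  · intro i hi
    rcases Finset.mem_union.mp hi with h | h
    · exact hIt i h
    · have h1 : t < I.max' hIne := hIt _ (I.max'_mem hIne)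
      exact lt_trans h1 (hKt i h)
  · exact Finset.sum_union hdisj

lemma key {p : Ultrafilter ℕ} (hpure : ∀ n : ℕ, p ≠ pure n) {A : Set ℕ} (hA : Sup A)
    (hAp : A ∈ p) :
    ∀ u : Ultrafilter ℕ, InF p u →
      (∀ t, Dset A t ∈ u) ∧ ∃ B : Set ℕ, B ∈ u ∧ B ⊆ Dset A 0 ∧ PF A B := by
  intro u hu
  induction hu with
  | base =>
    have hsingle : ∀ K : Finset ℕ, ↑K ⊆ A → K.Nonempty → K.sum id ∈ A → K = {K.sum id} := by
      intro K hKA hne hsum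
      by_cases hKM : K = {K.max' hne}
      · have hsumM : K.sum id = K.max' hne := by
          conv_lhs => rw [hKM]
          simp
        rw [hsumM]
        exact hKM
      · exfalso
        have hlt : ∀ i ∈ K, i < K.sum id := by
          intro i hi
          obtain ⟨x, hx, hxne⟩ : ∃ x ∈ K, x ≠ K.max' hne := by
            by_contra hcon
            push_neg at hcon
            apply hKM
            apply Finset.eq_singleton_iff_unique_mem.mpr
            exact ⟨K.max'_mem hne, hcon⟩
          have hxpos : 0 < x := hA.pos (hKA hx)
          have hMpos : 0 < K.max' hne := hA.pos (hKA (K.max'_mem hne))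
          have hsum2 : x + K.max' hne ≤ K.sum id := by
            have h1 : x + (K.erase x).sum id = K.sum id := by
              simpa using Finset.add_sum_erase K id hx
            have h2 : K.max' hne ∈ K.erase x := Finset.mem_erase.mpr ⟨fun h => hxne h.symm, K.max'_mem hne⟩
            have h3 : K.max' hne ≤ (K.erase x).sum id := by
              simpa using Finset.single_le_sum (f := id) (fun i _ => Nat.zero_le (id i)) h2
            omega
          have h4 : i ≤ K.max' hne := K.le_max' i hi
          omega
        have := hA (K.sum id) hsum K hKA hlt
        omega
    constructor
    · intro t
      have h1 : {x | t < x} ∈ p := gt_mem p hpure t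
      have hsub : A ∩ {x | t < x} ⊆ Dset A t := by
        rintro x ⟨hxA, hxt⟩
        exact ⟨{x}, by simpa using hxA, ⟨x, Finset.mem_singleton_self x⟩,
          by intro i hi; rw [Finset.mem_singleton] at hi; subst hi; exact hxt, by simp⟩
      exact mem_of_superset (inter_mem hAp h1) hsub
    · refine ⟨A, hAp, ?_, ?_⟩
      · intro x hx
        exact ⟨{x}, by simpa using hx, ⟨x, Finset.mem_singleton_self x⟩,
          by intro i hi; rw [Finset.mem_singleton] at hi; subst hi; exact hA.pos hx, by simp⟩
      · intro I J hIA hJA hIne hIB hJB hInit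
        have hJne : J.Nonempty := hIne.mono hInit.1
        have hI : I = {I.sum id} := hsingle I hIA hIne hIB
        have hJ : J = {J.sum id} := hsingle J hJA hJne hJB
        have hsub : I ⊆ J := hInit.1
        rw [hI, hJ] at hsub
        have : I.sum id = J.sum id := by simpa using hsub
        rw [hI, hJ, this]
  | isum u v hu hv ihu ihv =>
    obtain ⟨hDu, B, hBu, hBD, hBPF⟩ := ihu
    choose hDv C hCv hCD hCPF using ihv
    constructor
    · intro t
      rw [mem_indexedSum]
      refine mem_of_superset (hDu t) ?_
      intro x hx
      obtain ⟨I, hIA, hIne, hIt, hIsum⟩ := hx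
      refine mem_of_superset (hDv x (I.max' hIne)) ?_
      intro y hy
      obtain ⟨K, hKA, hKne, hKt, hKsum⟩ := hy
      have hKt' : ∀ j ∈ K, I.max' hIne < j := hKt
      obtain ⟨m1, m2, m3, m4⟩ := sum_union_mem_Dset hIA hKA hIne hIt hKt'
      exact ⟨I ∪ K, m1, m2, m3, by rw [m4, hIsum, hKsum]⟩
    · refine ⟨{z | ∃ I K : Finset ℕ, ↑I ⊆ A ∧ ↑K ⊆ A ∧ I.Nonempty ∧ K.Nonempty ∧
        I.sum id ∈ B ∧ K.sum id ∈ C (I.sum id) ∧ (∀ i ∈ I, ∀ j ∈ K, i < j) ∧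
        I.sum id + K.sum id = z}, ?_, ?_, ?_⟩
      · rw [mem_indexedSum]
        refine mem_of_superset hBu ?_
        intro x hx
        obtain ⟨I, hIA, hIne, hI0, hIsum⟩ := hBD hx
        refine mem_of_superset (inter_mem (hCv x) (hDv x (I.max' hIne))) ?_
        rintro y ⟨hyC, K, hKA, hKne, hKt, hKsum⟩
        refine ⟨I, K, hIA, hKA, hIne, hKne, by rw [hIsum]; exact hx,
          by rw [hIsum, hKsum]; exact hyC, ?_, by rw [hIsum, hKsum]⟩
        intro i hi j hj
        exact lt_of_le_of_lt (I.le_max' i hi) (hKt j hj)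
      · rintro z ⟨I, K, hIA, hKA, hIne, hKne, hIB, hKC, hlt, hsum⟩
        have hKt' : ∀ j ∈ K, I.max' hIne < j := by
          intro j hj
          by_contra h
          push_neg at h
          have := hlt (I.max' hIne) (I.max'_mem hIne) j hj
          omega
        have hI0 : ∀ i ∈ I, 0 < i := fun i hi => hA.pos (hIA hi)
        obtain ⟨m1, m2, m3, m4⟩ := sum_union_mem_Dset hIA hKA hIne hI0 hKt'
        exact ⟨I ∪ K, m1, m2, m3, by rw [m4, hsum]⟩
      · intro P Q hPA hQA hPne hPB' hQB' hInit
        obtain ⟨I₁, K₁, hI₁A, hK₁A, hI₁ne, hK₁ne, hI₁B, hK₁C, hlt₁, hsum₁⟩ := hPB'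
        obtain ⟨I₂, K₂, hI₂A, hK₂A, hI₂ne, hK₂ne, hI₂B, hK₂C, hlt₂, hsum₂⟩ := hQB'
        have hdisj₁ : Disjoint I₁ K₁ := by
          rw [Finset.disjoint_left]
          exact fun x h1 h2 => absurd (hlt₁ x h1 x h2) (lt_irrefl x)
        have hdisj₂ : Disjoint I₂ K₂ := by
          rw [Finset.disjoint_left]
          exact fun x h1 h2 => absurd (hlt₂ x h1 x h2) (lt_irrefl x)
        have hUA₁ : ↑(I₁ ∪ K₁) ⊆ A := by
          rw [Finset.coe_union]; exact Set.union_subset hI₁A hK₁A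
        have hUA₂ : ↑(I₂ ∪ K₂) ⊆ A := by
          rw [Finset.coe_union]; exact Set.union_subset hI₂A hK₂A
        have hP : P = I₁ ∪ K₁ := by
          apply rep_unique hA (P.sum id) P (I₁ ∪ K₁) hPA hUA₁ rfl
          rw [Finset.sum_union hdisj₁, hsum₁]
        have hQ : Q = I₂ ∪ K₂ := by
          apply rep_unique hA (Q.sum id) Q (I₂ ∪ K₂) hQA hUA₂ rfl
          rw [Finset.sum_union hdisj₂, hsum₂]
        subst hP
        subst hQ
        have hInitI₁ : Initial I₁ (I₁ ∪ K₁) := by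
          refine ⟨Finset.subset_union_left, ?_⟩
          intro i hi j hj hjI
          rcases Finset.mem_union.mp hj with h | h
          · exact absurd h hjI
          · exact hlt₁ i hi j h
        have hInitI₂ : Initial I₂ (I₂ ∪ K₂) := by
          refine ⟨Finset.subset_union_left, ?_⟩
          intro i hi j hj hjI
          rcases Finset.mem_union.mp hj with h | h
          · exact absurd h hjI
          · exact hlt₂ i hi j h
        have hI₁Q : Initial I₁ (I₂ ∪ K₂) := initial_trans hInitI₁ hInit
        have hII : I₁ = I₂ := by
          rcases initial_nested hI₁Q hInitI₂ with hsub | hsub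
          · refine hBPF I₁ I₂ hI₁A hI₂A hI₁ne hI₁B hI₂B ⟨hsub, ?_⟩
            intro i hi j hj hjI
            exact hI₁Q.2 i hi j (hInitI₂.1 hj) hjI
          · refine (hBPF I₂ I₁ hI₂A hI₁A hI₂ne hI₂B hI₁B ⟨hsub, ?_⟩).symm
            intro i hi j hj hjI
            exact hInitI₂.2 i hi j (hI₁Q.1 hj) hjI
        have hKK : K₁ = K₂ := by
          have hKCeq : K₂.sum id ∈ C (I₁.sum id) := by rw [hII]; exact hK₂C
          have hKsub : K₁ ⊆ K₂ := by
            intro x hx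
            have hxU : x ∈ I₂ ∪ K₂ := hInit.1 (Finset.mem_union_right _ hx)
            rcases Finset.mem_union.mp hxU with h | h
            · rw [← hII] at h
              exact absurd (hlt₁ x h x hx) (lt_irrefl x)
            · exact h
          refine hCPF (I₁.sum id) K₁ K₂ hK₁A hK₂A hK₁ne hK₁C hKCeq ⟨hKsub, ?_⟩
          intro i hi j hj hjK₁
          have hiP : i ∈ I₁ ∪ K₁ := Finset.mem_union_right _ hi
          have hjQ : j ∈ I₂ ∪ K₂ := Finset.mem_union_right _ hj
          have hjP : j ∉ I₁ ∪ K₁ := by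
            intro hjP
            rcases Finset.mem_union.mp hjP with h | h
            · rw [hII] at h
              exact absurd (hlt₂ j h j hj) (lt_irrefl j)
            · exact hjK₁ h
          exact hInit.2 i hiP j hjQ hjP
        rw [hII, hKK]

/-! ### Concatenation sets belong to powers -/

lemma conc_mem {A : Set ℕ} (hA : Sup A) {u : Ultrafilter ℕ}
    (hD : ∀ t, Dset A t ∈ u) {B : Set ℕ} (hBu : B ∈ u) (hBD : B ⊆ Dset A 0) :
    ∀ k, {z | ∃ J : Finset ℕ, ↑J ⊆ A ∧ Decomp B J (k + 1) ∧ J.sum id = z} ∈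
      sumPow u (k + 1) := by
  intro k
  induction k with
  | zero =>
    have hsub : B ⊆ {z | ∃ J : Finset ℕ, ↑J ⊆ A ∧ Decomp B J 1 ∧ J.sum id = z} := by
      intro z hz
      obtain ⟨I, hIA, hIne, _, hIsum⟩ := hBD hz
      exact ⟨I, hIA, Decomp.single I hIne (by rw [hIsum]; exact hz), hIsum⟩
    exact mem_of_superset hBu hsub
  | succ k ih =>
    have hstep : sumPow u (k + 2) = sumPow u (k + 1) + u := rfl
    rw [hstep, mem_add]
    refine mem_of_superset ih ?_
    intro x hx
    obtain ⟨J, hJA, hdec, hsum⟩ := hx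
    have hmem : B ∩ Dset A (J.max' hdec.nonempty) ∈ u := inter_mem hBu (hD _)
    refine mem_of_superset hmem ?_
    rintro y ⟨hyB, K, hKA, hKne, hKt, hKsum⟩
    have hlt : ∀ i ∈ J, ∀ j ∈ K, i < j :=
      fun i hi j hj => lt_of_le_of_lt (J.le_max' i hi) (hKt j hj)
    have hdisj : Disjoint J K := by
      rw [Finset.disjoint_left]
      exact fun a h1 h2 => absurd (hlt a h1 a h2) (lt_irrefl a)
    refine ⟨J ∪ K, ?_, ?_, ?_⟩
    · rw [Finset.coe_union]; exact Set.union_subset hJA hKA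
    · exact Decomp.cons J K (k + 1) hdec hKne (by rw [hKsum]; exact hyB) hlt
    · rw [Finset.sum_union hdisj, hsum, hKsum]

/-! ### From a Q-point to a super-increasing member -/

lemma qpoint_sup (p : Ultrafilter ℕ) (hpure : ∀ n : ℕ, p ≠ pure n)
    (hQ : ∀ F : ℕ → Set ℕ, (∀ n, (F n).Finite) → (Pairwise (Function.onFun Disjoint F)) →
      (⋃ n, F n) = Set.univ → ∃ A ∈ p, ∀ n, (A ∩ F n).Subsingleton) :
    ∃ A : Set ℕ, A ∈ p ∧ Sup A := by
  classical
  let b : ℕ → ℕ := fun n => Nat.rec 0 (fun k bk => (k + 2) * (bk + 1)) n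
  have hb0 : b 0 = 0 := rfl
  have hbs : ∀ n, b (n + 1) = (n + 2) * (b n + 1) := fun n => rfl
  have hb_lt : ∀ n, b n < b (n + 1) := by
    intro n
    rw [hbs]
    have h1 : 2 * (b n + 1) ≤ (n + 2) * (b n + 1) := Nat.mul_le_mul_right _ (by omega)
    omega
  have hb_mono : Monotone b := monotone_nat_of_le_succ (fun n => (hb_lt n).le)
  have hb_gt : ∀ x, x < b (x + 1) := by
    intro x
    rw [hbs]
    have h1 : (x + 2) * 1 ≤ (x + 2) * (b x + 1) := Nat.mul_le_mul_left _ (by omega)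
    omega
  have hb_sum : ∀ n, (∑ j ∈ Finset.range (n + 1), b j) < b (n + 1) := by
    intro n
    induction n with
    | zero =>
      have h1 : b 1 = 2 := rfl
      simp only [zero_add, Finset.sum_range_one, hb0, h1]
      omega
    | succ n ih =>
      rw [Finset.sum_range_succ]
      have h1 : 2 * (b (n + 1) + 1) ≤ (n + 1 + 2) * (b (n + 1) + 1) :=
        Nat.mul_le_mul_right _ (by omega)
      have h2 := hbs (n + 1)
      omega
  have hex : ∀ x : ℕ, ∃ n, x < b (n + 1) := fun x => ⟨x, hb_gt x⟩
  let idx : ℕ → ℕ := fun x => Nat.find (hex x)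
  have hidx_lt : ∀ x, x < b (idx x + 1) := fun x => Nat.find_spec (hex x)
  have hidx_le : ∀ x, b (idx x) ≤ x := by
    intro x
    rcases h : idx x with _ | k
    · rw [hb0]; exact Nat.zero_le x
    · by_contra hcon
      push_neg at hcon
      exact Nat.find_min (hex x) (show k < idx x from by omega) hcon
  have hidx_eq : ∀ x n, b n ≤ x → x < b (n + 1) → idx x = n := by
    intro x n h1 h2
    rcases lt_trichotomy (idx x) n with h | h | h
    · have hm := hb_mono (show idx x + 1 ≤ n from by omega)
      have := hidx_lt x
      omega
    · exact h
    · have hm := hb_mono (show n + 1 ≤ idx x from by omega)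
      have := hidx_le x
      omega
  have hdisj : Pairwise (Function.onFun Disjoint (fun n => Set.Ico (b n) (b (n + 1)))) := by
    intro i j hij
    simp only [Function.onFun]
    rw [Set.disjoint_left]
    intro x hxi hxj
    simp only [Set.mem_Ico] at hxi hxj
    have e1 := hidx_eq x i hxi.1 hxi.2
    have e2 := hidx_eq x j hxj.1 hxj.2
    exact hij (by omega)
  have hcover : (⋃ n, Set.Ico (b n) (b (n + 1))) = Set.univ := by
    ext x
    simp only [Set.mem_iUnion, Set.mem_Ico, Set.mem_univ, iff_true]
    exact ⟨idx x, hidx_le x, hidx_lt x⟩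
  obtain ⟨A₀, hA₀p, sel⟩ := hQ _ (fun n => Set.finite_Ico _ _) hdisj hcover
  obtain ⟨A₁, hA₁p, hA₁sub, hA₁par⟩ :
      ∃ A₁ : Set ℕ, A₁ ∈ p ∧ A₁ ⊆ A₀ ∧ ∀ x ∈ A₁, ∀ y ∈ A₁, idx x % 2 = idx y % 2 := by
    rcases Ultrafilter.mem_or_compl_mem p {x | idx x % 2 = 0} with h | h
    · refine ⟨A₀ ∩ {x | idx x % 2 = 0}, inter_mem hA₀p h, Set.inter_subset_left, ?_⟩
      intro x hx y hy
      have h1 : idx x % 2 = 0 := hx.2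
      have h2 : idx y % 2 = 0 := hy.2
      omega
    · refine ⟨A₀ ∩ {x | idx x % 2 = 0}ᶜ, inter_mem hA₀p h, Set.inter_subset_left, ?_⟩
      intro x hx y hy
      have h1 : ¬ idx x % 2 = 0 := hx.2
      have h2 : ¬ idx y % 2 = 0 := hy.2
      omega
  refine ⟨A₁ ∩ {x | 0 < x}, inter_mem hA₁p (gt_mem p hpure 0), ?_⟩
  intro y hy I hIA hIlt
  obtain ⟨hyA₁, hy0⟩ := hy
  have hyb1 : b (idx y) ≤ y := hidx_le y
  have hyb2 : y < b (idx y + 1) := hidx_lt y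
  have hidxI : ∀ i ∈ I, idx i + 2 ≤ idx y := by
    intro i hi
    have hiA : i ∈ A₁ ∩ {x | 0 < x} := hIA hi
    have hiA₁ : i ∈ A₁ := hiA.1
    have hilt : i < y := hIlt i hi
    have h1 : idx i ≤ idx y := by
      by_contra h
      push_neg at h
      have hm := hb_mono (show idx y + 1 ≤ idx i from by omega)
      have := hidx_le i
      omega
    have h2 : idx i ≠ idx y := by
      intro h
      have e : i = y := sel (idx y)
        ⟨hA₁sub hiA₁, by rw [← h]; exact ⟨hidx_le i, hidx_lt i⟩⟩
        ⟨hA₁sub hyA₁, hyb1, hyb2⟩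
      omega
    have h3 : idx i % 2 = idx y % 2 := hA₁par i hiA₁ y hyA₁
    omega
  rcases I.eq_empty_or_nonempty with rfl | hIne
  · simpa using hy0
  · have hinj : ∀ x ∈ I, ∀ y ∈ I, idx x + 1 = idx y + 1 → x = y := by
      intro a ha c hc h
      have hac : idx a = idx c := by omega
      exact sel (idx a)
        ⟨hA₁sub (hIA ha).1, hidx_le a, hidx_lt a⟩
        ⟨hA₁sub (hIA hc).1, by rw [hac]; exact ⟨hidx_le c, hidx_lt c⟩⟩
    have h4 : I.sum id < ∑ i ∈ I, b (idx i + 1) := by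
      have := Finset.sum_lt_sum_of_nonempty hIne
        (f := id) (g := fun i => b (idx i + 1)) (fun i _ => hidx_lt i)
      simpa using this
    have h5 : (∑ i ∈ I, b (idx i + 1)) = ∑ j ∈ I.image (fun i => idx i + 1), b j :=
      (Finset.sum_image hinj).symm
    have h6 : I.image (fun i => idx i + 1) ⊆ Finset.range (idx y) := by
      intro j hj
      obtain ⟨i, hi, rfl⟩ := Finset.mem_image.mp hj
      rw [Finset.mem_range]
      have := hidxI i hi
      omega
    have h7 : (∑ j ∈ I.image (fun i => idx i + 1), b j) ≤ ∑ j ∈ Finset.range (idx y), b j :=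
      Finset.sum_le_sum_of_subset h6
    obtain ⟨i0, hi0⟩ := hIne
    have hn2 : 2 ≤ idx y := by have := hidxI i0 hi0; omega
    have h8 : (∑ j ∈ Finset.range (idx y), b j) < b (idx y) := by
      obtain ⟨k, hk⟩ : ∃ k, idx y = k + 1 := ⟨idx y - 1, by omega⟩
      rw [hk]
      exact hb_sum k
    omega

end Statement9Aux

/-- If `p` is a Q-point then every element `u` of `𝓕^p` generates a free subsemigroup; in
particular no element of `𝓕^p` is an idempotent ultrafilter. -/
theorem statement9 (p : Ultrafilter ℕ) (hp : IsQPoint p) :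
    (∀ u : Ultrafilter ℕ, InF p u →
      ∀ n m : ℕ, 1 ≤ n → 1 ≤ m → sumPow u n = sumPow u m → n = m) ∧
    ∀ u : Ultrafilter ℕ, InF p u → u + u ≠ u := by
  obtain ⟨hpure, hQ⟩ := hp
  obtain ⟨A, hAp, hA⟩ := Statement9Aux.qpoint_sup p hpure hQ
  have main : ∀ u : Ultrafilter ℕ, InF p u →
      ∀ n m : ℕ, 1 ≤ n → 1 ≤ m → sumPow u n = sumPow u m → n = m := by
    intro u hu n m hn hm heq
    obtain ⟨hD, B, hBu, hBD, hBPF⟩ := Statement9Aux.key hpure hA hAp u hu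
    obtain ⟨n', rfl⟩ : ∃ n', n = n' + 1 := ⟨n - 1, by omega⟩
    obtain ⟨m', rfl⟩ : ∃ m', m = m' + 1 := ⟨m - 1, by omega⟩
    have h1 := Statement9Aux.conc_mem hA hD hBu hBD n'
    have h2 := Statement9Aux.conc_mem hA hD hBu hBD m'
    rw [heq] at h1
    have hne : ({z | ∃ J : Finset ℕ, ↑J ⊆ A ∧ Statement9Aux.Decomp B J (n' + 1) ∧
          J.sum id = z} ∩
        {z | ∃ J : Finset ℕ, ↑J ⊆ A ∧ Statement9Aux.Decomp B J (m' + 1) ∧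
          J.sum id = z}).Nonempty :=
      Filter.nonempty_of_mem (inter_mem h1 h2)
    obtain ⟨z, ⟨J₁, hJ₁A, hd₁, hs₁⟩, ⟨J₂, hJ₂A, hd₂, hs₂⟩⟩ := hne
    have hJJ : J₁ = J₂ := Statement9Aux.rep_unique hA z J₁ J₂ hJ₁A hJ₂A hs₁ hs₂
    rw [hJJ] at hd₁
    exact Statement9Aux.decomp_decode hA hBPF (n' + 1) J₂ hJ₂A hd₁ (m' + 1) hd₂
  refine ⟨main, ?_⟩
  intro u hu huu
  have h2 : sumPow u 2 = sumPow u 1 := by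
    show u + u = u
    exact huu
  exact absurd (main u hu 2 1 (by omega) (by omega) h2) (by omega)
end

section
/- Let p be a selective ultrafilter on ω, and let ⟨u_n : n < ω⟩ and ⟨v_n : n < ω⟩ be two p-injective sequences of ultrafilters on ω. Then p-lim_n u_n = p-lim_n v_n if and only if {n < ω : u_n = v_n} ∈ p. -/
/-- The `u`-limit of a sequence of ultrafilters: `A ∈ ulim u v ↔ {n | A ∈ v n} ∈ u`. -/
def ulim {α : Type*} (u : Ultrafilter ℕ) (v : ℕ → Ultrafilter α) : Ultrafilter α := u.bind v

/-- A selective ultrafilter: nonprincipal, and every `f : ℕ → ℕ` is constant or injective on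
some set of the ultrafilter. -/
def IsSelective (p : Ultrafilter ℕ) : Prop :=
  (∀ n : ℕ, p ≠ pure n) ∧
    ∀ f : ℕ → ℕ, ∃ A ∈ p, (∃ c, ∀ a ∈ A, f a = c) ∨ Set.InjOn f A

/-- A sequence of ultrafilters is `p`-injective if it is injective on some set of `p`. -/
def PInjective (p : Ultrafilter ℕ) (u : ℕ → Ultrafilter ℕ) : Prop :=
  ∃ A ∈ p, Set.InjOn u A

open Set Filter
open scoped Classical

lemma mem_ulim {α : Type*} {u : Ultrafilter ℕ} {v : ℕ → Ultrafilter α} {s : Set α} :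
    s ∈ ulim u v ↔ {n | s ∈ v n} ∈ u := by
  show s ∈ (Filter.bind ↑u fun x => ↑(v x)) ↔ _
  rw [Filter.mem_bind']; rfl

section prelim
variable {p : Ultrafilter ℕ}

lemma finite_notMem (hp : ∀ n : ℕ, p ≠ pure n) {s : Set ℕ} (hs : s.Finite) : s ∉ p := by
  intro h
  obtain ⟨x, -, hx⟩ := Ultrafilter.eq_pure_of_finite_mem hs h
  exact hp x hx

lemma infinite_of_mem (hp : ∀ n : ℕ, p ≠ pure n) {s : Set ℕ} (hs : s ∈ p) : s.Infinite := by
  intro hfin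
  exact finite_notMem hp hfin hs


private def tF (g' : ℕ → ℕ) : ℕ → ℕ
  | 0 => 0
  | k + 1 => g' (tF g' k) + tF g' k + 1

private def iota (g' : ℕ → ℕ) (m : ℕ) : ℕ :=
  @Nat.findGreatest (fun k => tF g' k ≤ m) (fun _ => Nat.decLe _ _) m

private lemma tF_strictMono (g' : ℕ → ℕ) : StrictMono (tF g') :=
  strictMono_nat_of_lt_succ (fun k => by simp [tF])

private lemma iota_le (g' : ℕ → ℕ) (m : ℕ) : tF g' (iota g' m) ≤ m :=
  @Nat.findGreatest_spec 0 (fun k => tF g' k ≤ m) (fun _ => Nat.decLe _ _) m (Nat.zero_le m)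
    (by simp [tF])

private lemma lt_iota_succ (g' : ℕ → ℕ) (m : ℕ) : m < tF g' (iota g' m + 1) := by
  by_contra hcon
  push_neg at hcon
  have h1 : iota g' m + 1 ≤ m := le_trans (tF_strictMono g').le_apply hcon
  have h2 := @Nat.le_findGreatest (iota g' m + 1) (fun k => tF g' k ≤ m)
    (fun _ => Nat.decLe _ _) m h1 hcon
  have : iota g' m + 1 ≤ iota g' m := h2
  omega

private lemma iota_mono (g' : ℕ → ℕ) : Monotone (iota g') := by
  intro n m hnm
  exact @Nat.le_findGreatest (iota g' n) (fun k => tF g' k ≤ m) (fun _ => Nat.decLe _ _) m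
    (le_trans (@Nat.findGreatest_le (fun k => tF g' k ≤ n) (fun _ => Nat.decLe _ _) n) hnm)
    (le_trans (iota_le g' n) hnm)

/-- Growth lemma: a selective (indeed any Q-point-ish) ultrafilter has sets growing
faster than any prescribed function. -/
lemma lemQ (hp : IsSelective p) (g : ℕ → ℕ) :
    ∃ B ∈ p, ∀ n ∈ B, ∀ m ∈ B, n < m → g n < m := by
  obtain ⟨hnp, hsel⟩ := hp
  set g' : ℕ → ℕ := fun x => (Finset.range (x + 1)).sup g with hg'
  have hg'mono : Monotone g' := fun x y hxy =>
    Finset.sup_mono (Finset.range_subset_range.2 (by omega))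
  have hgg' : ∀ n, g n ≤ g' n := fun n => Finset.le_sup (Finset.mem_range.2 n.lt_succ_self)
  obtain ⟨C, hC, hCconst | hCinj⟩ := hsel (iota g')
  · -- constant case: C would be finite
    obtain ⟨k0, hk0⟩ := hCconst
    exfalso
    refine finite_notMem hnp ((Set.finite_Iio (tF g' (k0 + 1))).subset ?_) hC
    intro m hm
    have := lt_iota_succ g' m
    rw [hk0 m hm] at this
    exact this
  · -- injective case: use parity of iota
    have hsplit : {m | iota g' m % 2 = 0} ∈ p ∨ {m | iota g' m % 2 = 0}ᶜ ∈ p :=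
      p.mem_or_compl_mem _
    have key : ∀ B ∈ p, B ⊆ C → (∀ n ∈ B, ∀ m ∈ B, iota g' n % 2 = iota g' m % 2) →
        ∀ n ∈ B, ∀ m ∈ B, n < m → g n < m := by
      intro B _ hBC hpar n hn m hm hnm
      have hιne : iota g' n ≠ iota g' m := fun h => (hnm.ne) (hCinj (hBC hn) (hBC hm) h)
      have hιle : iota g' n ≤ iota g' m := iota_mono g' hnm.le
      have h2 : iota g' n + 2 ≤ iota g' m := by
        have := hpar n hn m hm
        omega
      have e1 : g n ≤ g' (tF g' (iota g' n + 1)) :=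
        le_trans (hgg' n) (hg'mono (lt_iota_succ g' n).le)
      have e2 : g' (tF g' (iota g' n + 1)) < tF g' (iota g' n + 2) := by
        have : tF g' (iota g' n + 2) = g' (tF g' (iota g' n + 1)) + tF g' (iota g' n + 1) + 1 :=
          rfl
        omega
      have e3 : tF g' (iota g' n + 2) ≤ tF g' (iota g' m) := (tF_strictMono g').monotone h2
      have e4 : tF g' (iota g' m) ≤ m := iota_le g' m
      omega
    rcases hsplit with h0 | h1
    · refine ⟨C ∩ {m | iota g' m % 2 = 0}, Filter.inter_mem hC h0,
        key _ (Filter.inter_mem hC h0) Set.inter_subset_left ?_⟩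
      rintro n ⟨-, hn⟩ m ⟨-, hm⟩
      simpa using hn.trans hm.symm
    · refine ⟨C ∩ {m | iota g' m % 2 = 0}ᶜ, Filter.inter_mem hC h1,
        key _ (Filter.inter_mem hC h1) Set.inter_subset_left ?_⟩
      rintro n ⟨-, hn⟩ m ⟨-, hm⟩
      simp only [Set.mem_compl_iff, Set.mem_setOf_eq] at hn hm
      omega

/-- Diagonalization lemma for selective ultrafilters. -/
lemma lemD (hp : IsSelective p) (A : ℕ → Set ℕ) (hA : ∀ n, A n ∈ p) :
    ∃ B ∈ p, ∀ n ∈ B, ∀ m ∈ B, n < m → m ∈ A n := by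
  have hnp := hp.1
  -- decreasing intersections
  set Bn : ℕ → Set ℕ := fun n => {x | ∀ k ≤ n, x ∈ A k} with hBn
  have hBnp : ∀ n, Bn n ∈ p := by
    intro n
    induction n with
    | zero => exact Filter.mem_of_superset (hA 0) (fun x hx k hk => by
        rw [Nat.le_zero.mp hk]; exact hx)
    | succ n ih =>
      refine Filter.mem_of_superset (Filter.inter_mem ih (hA (n + 1))) ?_
      rintro x ⟨hx1, hx2⟩ k hk
      rcases Nat.lt_succ_iff_lt_or_eq.mp (Nat.lt_succ_of_le hk) with h | h
      · exact hx1 k (by omega)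
      · rw [h]; exact hx2
  have hex : ∀ m : ℕ, ∃ n, m ∉ Bn n ∨ n = m + 1 := fun m => ⟨m + 1, Or.inr rfl⟩
  set f : ℕ → ℕ := fun m => Nat.find (hex m) with hf
  have hfkey : ∀ m k, k < f m → m ∈ Bn k := by
    intro m k hk
    have := Nat.find_min (hex m) hk
    push_neg at this
    exact this.1
  obtain ⟨C, hC, hconst | hinj⟩ := hp.2 f
  · -- constant case is impossible
    exfalso
    obtain ⟨c, hc⟩ := hconst
    have hsing : {m : ℕ | m + 1 = c} ∉ p := by
      refine finite_notMem hnp (Set.Finite.subset (Set.finite_singleton (c - 1)) ?_)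
      intro m hm
      simp only [Set.mem_setOf_eq] at hm
      simp [Set.mem_singleton_iff]; omega
    have hC' : C ∩ Bn c ∩ {m : ℕ | m + 1 = c}ᶜ ∈ p :=
      Filter.inter_mem (Filter.inter_mem hC (hBnp c))
        (Ultrafilter.compl_mem_iff_notMem.mpr hsing)
    obtain ⟨m, ⟨hmC, hmB⟩, hmne⟩ := Ultrafilter.nonempty_of_mem hC'
    have hfm : f m = c := hc m hmC
    have := Nat.find_spec (hex m)
    rw [show Nat.find (hex m) = f m from rfl, hfm] at this
    rcases this with h | h
    · exact h hmB
    · exact hmne h.symm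
  · -- injective case
    have hfin : ∀ n : ℕ, ∃ b, ∀ k, k ∈ C → f k ≤ n → k ≤ b := by
      intro n
      have hSfin : {k | k ∈ C ∧ f k ≤ n}.Finite := by
        apply Set.Finite.of_finite_image (f := f)
        · exact (Set.finite_Iic n).subset (by rintro y ⟨k, ⟨-, hk⟩, rfl⟩; exact hk)
        · exact hinj.mono (fun k hk => hk.1)
      obtain ⟨b, hb⟩ := hSfin.bddAbove
      exact ⟨b, fun k h1 h2 => hb ⟨h1, h2⟩⟩
    choose gbd hgbd using hfin
    obtain ⟨B', hB', hB'g⟩ := lemQ hp gbd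
    refine ⟨B' ∩ C, Filter.inter_mem hB' hC, ?_⟩
    rintro n ⟨hnB, hnC⟩ m ⟨hmB, hmC⟩ hnm
    have hgn : gbd n < m := hB'g n hnB m hmB hnm
    have hfm : n < f m := by
      by_contra hcon
      push_neg at hcon
      exact absurd (hgbd n m hmC hcon) (by omega)
    have := hfkey m n hfm
    exact this n le_rfl

/-- Ramsey property for pairs. -/
lemma ramsey2 (hp : IsSelective p) (c : ℕ → ℕ → Prop) :
    ∃ H ∈ p, (∀ n ∈ H, ∀ m ∈ H, n < m → c n m) ∨ (∀ n ∈ H, ∀ m ∈ H, n < m → ¬ c n m) := by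
  set P0 : Set ℕ := {n | {m | c n m} ∈ p} with hP0
  rcases p.mem_or_compl_mem P0 with h0 | h0
  · have hA : ∀ n, {m | n ∈ P0 → c n m} ∈ p := by
      intro n
      by_cases hn : n ∈ P0
      · exact Filter.mem_of_superset hn (fun m hm _ => hm)
      · exact Filter.mem_of_superset Filter.univ_mem (fun m _ h => absurd h hn)
    obtain ⟨B, hB, hBkey⟩ := lemD hp _ hA
    exact ⟨B ∩ P0, Filter.inter_mem hB h0,
      Or.inl (fun n hn m hm hnm => hBkey n hn.1 m hm.1 hnm hn.2)⟩
  · have hA : ∀ n, {m | n ∈ P0ᶜ → ¬ c n m} ∈ p := by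
      intro n
      by_cases hn : n ∈ P0
      · exact Filter.mem_of_superset Filter.univ_mem (fun m _ h => absurd hn h)
      · have : {m | c n m}ᶜ ∈ p := Ultrafilter.compl_mem_iff_notMem.mpr hn
        exact Filter.mem_of_superset this (fun m hm _ => hm)
    obtain ⟨B, hB, hBkey⟩ := lemD hp _ hA
    exact ⟨B ∩ P0ᶜ, Filter.inter_mem hB h0,
      Or.inr (fun n hn m hm hnm => hBkey n hn.1 m hm.1 hnm hn.2)⟩

end prelim

lemma ultrafilter_ne_iff {u w : Ultrafilter ℕ} (h : u ≠ w) : ∃ T, T ∈ u ∧ T ∉ w := by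
  have : ¬ ∀ s : Set ℕ, s ∈ u ↔ s ∈ w := by
    intro hall
    exact h (Ultrafilter.coe_injective (Filter.ext hall))
  push_neg at this
  obtain ⟨s, hs⟩ := this
  rcases hs with ⟨h1, h2⟩ | ⟨h1, h2⟩
  · exact ⟨s, h1, h2⟩
  · refine ⟨sᶜ, Ultrafilter.compl_mem_iff_notMem.mpr h1, ?_⟩
    rw [Ultrafilter.compl_mem_iff_notMem]
    exact fun h3 => h3 h2

/-- Key lemma: a `p`-limit of an (almost) injective sequence `u` cannot equal a `p`-sum-like
limit of `v` when the witnessing sets `Q m ∈ v m` are uniformly small for all `u n`. -/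
lemma lemA {p : Ultrafilter ℕ} (hp : IsSelective p) (u v : ℕ → Ultrafilter ℕ)
    (hw : ulim p u = ulim p v) (H : Set ℕ) (hH : H ∈ p) (hinj : Set.InjOn u H)
    (Q : ℕ → Set ℕ) (hQv : ∀ m ∈ H, Q m ∈ v m) (hQu : ∀ j ∈ H, ∀ n ∈ H, Q j ∉ u n) :
    False := by
  set w := ulim p v with hwdef
  -- at most one n ∈ H with u n = w
  have hFss : {n | n ∈ H ∧ u n = w}.Subsingleton := by
    rintro n ⟨hn1, hn2⟩ m ⟨hm1, hm2⟩
    exact hinj hn1 hm1 (hn2.trans hm2.symm)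
  have hH1 : H ∩ {n | n ∈ H ∧ u n = w}ᶜ ∈ p :=
    Filter.inter_mem hH
      (Ultrafilter.compl_mem_iff_notMem.mpr (finite_notMem hp.1 hFss.finite))
  set H1 := H ∩ {n | n ∈ H ∧ u n = w}ᶜ with hH1def
  have hne : ∀ n ∈ H1, u n ≠ w := by
    rintro n ⟨hn1, hn2⟩
    intro hcon
    exact hn2 ⟨hn1, hcon⟩
  -- choose separating sets
  have hTex : ∀ n, ∃ T : Set ℕ, n ∈ H1 → T ∈ u n ∧ T ∉ w := by
    intro n
    by_cases hn : n ∈ H1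
    · obtain ⟨T, hT⟩ := ultrafilter_ne_iff (hne n hn)
      exact ⟨T, fun _ => hT⟩
    · exact ⟨∅, fun h => absurd h hn⟩
  choose T hT using hTex
  -- diagonalize: (T n)ᶜ ∈ w, so it is in v m for p-many m
  have hA : ∀ n, {m | n ∈ H1 → (T n)ᶜ ∈ v m} ∈ p := by
    intro n
    by_cases hn : n ∈ H1
    · have h1 : (T n)ᶜ ∈ w := Ultrafilter.compl_mem_iff_notMem.mpr (hT n hn).2
      have h2 : {m | (T n)ᶜ ∈ v m} ∈ p := mem_ulim.mp h1
      exact Filter.mem_of_superset h2 (fun m hm _ => hm)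
    · exact Filter.mem_of_superset Filter.univ_mem (fun m _ h => absurd h hn)
  obtain ⟨B0, hB0, hB0key⟩ := lemD hp _ hA
  set B := B0 ∩ H1 with hBdef
  have hB : B ∈ p := Filter.inter_mem hB0 hH1
  -- the separating set X
  set X := ⋃ m ∈ B, (Q m ∩ {x | ∀ k, k ∈ B → k < m → x ∉ T k}) with hXdef
  have hXv : ∀ m ∈ B, X ∈ v m := by
    intro m hm
    have h1 : (⋂ k ∈ B ∩ Set.Iio m, (T k)ᶜ) ∈ v m := by
      refine (Filter.biInter_mem ((Set.finite_Iio m).subset Set.inter_subset_right)).mpr ?_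
      rintro k ⟨hk1, hk2⟩
      exact hB0key k hk1.1 m hm.1 hk2 hk1.2
    refine Filter.mem_of_superset (Filter.inter_mem (hQv m hm.2.1) h1) ?_
    intro x ⟨hx1, hx2⟩
    refine Set.mem_biUnion hm ⟨hx1, ?_⟩
    intro k hk1 hk2
    have := Set.mem_iInter₂.mp hx2 k ⟨hk1, hk2⟩
    exact this
  have hXw : X ∈ w := mem_ulim.mpr (Filter.mem_of_superset hB (fun m hm => hXv m hm))
  have hXu : {n | X ∈ u n} ∈ p := mem_ulim.mp (hw ▸ hXw)
  obtain ⟨n, hnX, hnB⟩ := Ultrafilter.nonempty_of_mem (Filter.inter_mem hXu hB)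
  -- derive the contradiction
  have h1 : X ∩ T n ∈ u n := Filter.inter_mem hnX (hT n hnB.2).1
  have h2 : X ∩ T n ⊆ ⋃ m ∈ B ∩ Set.Iic n, Q m := by
    rintro x ⟨hx1, hx2⟩
    obtain ⟨m, hm, hxm⟩ := Set.mem_iUnion₂.mp hx1
    rcases le_or_gt m n with hle | hlt
    · exact Set.mem_biUnion ⟨hm, hle⟩ hxm.1
    · exact absurd hx2 (hxm.2 n hnB hlt)
  have h3 : (⋃ m ∈ B ∩ Set.Iic n, Q m) ∈ u n := Filter.mem_of_superset h1 h2
  obtain ⟨m, hm, hQm⟩ :=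
    (Ultrafilter.finite_biUnion_mem_iff ((Set.finite_Iic n).subset Set.inter_subset_right)).mp h3
  exact hQu m hm.1.2.1 n hnB.2.1 hQm

lemma main_case {p : Ultrafilter ℕ} (hp : IsSelective p) (u v : ℕ → Ultrafilter ℕ)
    (H : Set ℕ) (hH : H ∈ p) (hinj : Set.InjOn u H) (S : ℕ → Set ℕ)
    (hS : ∀ n ∈ H, S n ∈ u n ∧ S n ∉ v n)
    (hab : ∀ n ∈ H, ∀ m ∈ H, n < m → S n ∈ u m ∧ S n ∈ v m) :
    ulim p u ≠ ulim p v := by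
  intro hw
  obtain ⟨H2', hH2', hc⟩ := ramsey2 hp (fun n m => S m ∈ u n)
  set H2 := H2' ∩ H with hH2def
  have hH2 : H2 ∈ p := Filter.inter_mem hH2' hH
  -- the standard "intervals" sets
  set Q : ℕ → Set ℕ := fun m => {x | (∀ k, k ∈ H2 → k < m → x ∈ S k) ∧ x ∉ S m} with hQdef
  have hQv : ∀ m ∈ H2, Q m ∈ v m := by
    intro m hm
    have h1 : (⋂ k ∈ H2 ∩ Set.Iio m, S k) ∈ v m := by
      refine (Filter.biInter_mem ((Set.finite_Iio m).subset Set.inter_subset_right)).mpr ?_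
      rintro k ⟨hk1, hk2⟩
      exact (hab k hk1.2 m hm.2 hk2).2
    have h2 : (S m)ᶜ ∈ v m := Ultrafilter.compl_mem_iff_notMem.mpr (hS m hm.2).2
    refine Filter.mem_of_superset (Filter.inter_mem h1 h2) ?_
    rintro x ⟨hx1, hx2⟩
    exact ⟨fun k hk1 hk2 => Set.mem_iInter₂.mp hx1 k ⟨hk1, hk2⟩, hx2⟩
  rcases hc with hcT | hcF
  · -- backward memberships hold: apply the key lemma
    have hSu : ∀ j ∈ H2, ∀ n ∈ H2, S j ∈ u n := by
      intro j hj n hn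
      rcases lt_trichotomy j n with h | h | h
      · exact (hab j hj.2 n hn.2 h).1
      · rw [← h] at hn ⊢; exact (hS j hj.2).1
      · exact hcT n hn.1 j hj.1 h
    have hQu : ∀ j ∈ H2, ∀ n ∈ H2, Q j ∉ u n := by
      intro j hj n hn hcon
      have h1 : (S j)ᶜ ∈ u n :=
        Filter.mem_of_superset hcon (fun x hx => hx.2)
      exact (Ultrafilter.compl_mem_iff_notMem.mp h1) (hSu j hj n hn)
    exact lemA hp u v hw H2 hH2 (hinj.mono Set.inter_subset_right) Q hQv hQu
  · -- backward memberships fail: parity construction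
    have hinf : (setOf (· ∈ H2)).Infinite := infinite_of_mem hp.1 hH2
    set cnt : ℕ → ℕ := Nat.count (· ∈ H2) with hcnt
    set nth : ℕ → ℕ := Nat.nth (· ∈ H2) with hnth
    have hnthmem : ∀ i, nth i ∈ H2 := fun i => Nat.nth_mem_of_infinite hinf i
    have hcntnth : ∀ i, cnt (nth i) = i := fun i => Nat.count_nth_of_infinite hinf i
    have hnthcnt : ∀ m, m ∈ H2 → nth (cnt m) = m := fun m hm => Nat.nth_count hm
    have hmono : StrictMono nth := Nat.nth_strictMono hinf
    obtain ⟨r, hr2, hrE⟩ : ∃ r, r < 2 ∧ {m | m ∈ H2 ∧ cnt m % 2 = r} ∈ p := by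
      rcases p.mem_or_compl_mem {m | cnt m % 2 = 0} with h | h
      · exact ⟨0, by omega, Filter.mem_of_superset (Filter.inter_mem hH2 h)
          (fun m hm => ⟨hm.1, hm.2⟩)⟩
      · refine ⟨1, by omega, Filter.mem_of_superset (Filter.inter_mem hH2 h) ?_⟩
        rintro m ⟨hm1, hm2⟩
        simp only [Set.mem_compl_iff, Set.mem_setOf_eq] at hm2 ⊢
        exact ⟨hm1, by omega⟩
    set E := {m | m ∈ H2 ∧ cnt m % 2 = r} with hEdef
    set X := ⋃ m ∈ {m | m ∈ H2 ∧ cnt m % 2 ≠ r}, Q m with hXdef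
    -- X belongs to every u l for l ∈ E
    have hXu : ∀ l ∈ E, X ∈ u l := by
      rintro l ⟨hl1, hl2⟩
      set m := nth (cnt l + 1) with hmdef
      have hmH2 : m ∈ H2 := hnthmem _
      have hcm : cnt m = cnt l + 1 := hcntnth _
      have hlm : l < m := by
        have := hmono (Nat.lt_succ_self (cnt l))
        rwa [hnthcnt l hl1] at this
      have hQmu : Q m ∈ u l := by
        have h1 : (⋂ k ∈ H2 ∩ Set.Iio m, S k) ∈ u l := by
          refine (Filter.biInter_mem ((Set.finite_Iio m).subset Set.inter_subset_right)).mpr ?_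
          rintro k ⟨hk1, hk2⟩
          -- k ∈ H2 with k < m implies k ≤ l
          have hkl : k ≤ l := by
            have e1 : nth (cnt k) = k := hnthcnt k hk1
            have e2 : cnt k < cnt l + 1 := by
              have := hmono.lt_iff_lt (a := cnt k) (b := cnt l + 1)
              rw [e1] at this
              exact this.mp hk2
            have e3 : nth (cnt k) ≤ nth (cnt l) := hmono.monotone (by omega)
            rw [e1, hnthcnt l hl1] at e3
            exact e3
          rcases lt_or_eq_of_le hkl with h | h
          · exact (hab k hk1.2 l hl1.2 h).1
          · rw [h]; exact (hS l hl1.2).1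
        have h2 : (S m)ᶜ ∈ u l :=
          Ultrafilter.compl_mem_iff_notMem.mpr (hcF l hl1.1 m hmH2.1 hlm)
        refine Filter.mem_of_superset (Filter.inter_mem h1 h2) ?_
        rintro x ⟨hx1, hx2⟩
        exact ⟨fun k hk1 hk2 => Set.mem_iInter₂.mp hx1 k ⟨hk1, hk2⟩, hx2⟩
      refine Filter.mem_of_superset hQmu ?_
      intro x hx
      exact Set.mem_biUnion ⟨hmH2, by omega⟩ hx
    -- X avoids every v l for l ∈ E
    have hXv : ∀ l ∈ E, X ∉ v l := by
      rintro l ⟨hl1, hl2⟩ hcon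
      have hdisj : Q l ∩ X = ∅ := by
        ext x
        simp only [Set.mem_inter_iff, Set.mem_empty_iff_false, iff_false, not_and]
        intro hxl hxX
        obtain ⟨m, hm, hxm⟩ := Set.mem_iUnion₂.mp hxX
        have hne : m ≠ l := fun h => hm.2 (h ▸ hl2)
        rcases lt_or_gt_of_ne hne with h | h
        · exact hxm.2 (hxl.1 m hm.1 h)
        · exact hxl.2 (hxm.1 l hl1 h)
      have : Q l ⊆ Xᶜ := by
        intro x hx
        intro hxX
        have : x ∈ Q l ∩ X := ⟨hx, hxX⟩
        rw [hdisj] at this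
        exact this
      have hXc : Xᶜ ∈ v l := Filter.mem_of_superset (hQv l hl1) this
      exact (Ultrafilter.compl_mem_iff_notMem.mp hXc) hcon
    -- contradiction with hw
    have h1 : X ∈ ulim p u :=
      mem_ulim.mpr (Filter.mem_of_superset hrE (fun l hl => hXu l hl))
    have h2 : {n | X ∈ v n} ∈ p := mem_ulim.mp (hw ▸ h1)
    obtain ⟨l, hlv, hlE⟩ := Ultrafilter.nonempty_of_mem (Filter.inter_mem h2 hrE)
    exact hXv l hlE hlv

/-- If `p` is selective and `⟨u_n⟩`, `⟨v_n⟩` are `p`-injective, then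
`p-lim_n u_n = p-lim_n v_n ↔ {n | u_n = v_n} ∈ p`. -/
theorem statement13 (p : Ultrafilter ℕ) (hp : IsSelective p)
    (u v : ℕ → Ultrafilter ℕ) (hu : PInjective p u) (hv : PInjective p v) :
    ulim p u = ulim p v ↔ {n | u n = v n} ∈ p := by
  constructor
  · -- hard direction
    intro hw
    by_contra hN
    have hNc : {n | u n = v n}ᶜ ∈ p := Ultrafilter.compl_mem_iff_notMem.mpr hN
    obtain ⟨Au, hAu, hAuinj⟩ := hu
    obtain ⟨Av, hAv, hAvinj⟩ := hv
    set A0 := Au ∩ Av ∩ {n | u n = v n}ᶜ with hA0def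
    have hA0 : A0 ∈ p := Filter.inter_mem (Filter.inter_mem hAu hAv) hNc
    have hSex : ∀ n, ∃ s : Set ℕ, n ∈ A0 → s ∈ u n ∧ s ∉ v n := by
      intro n
      by_cases hn : n ∈ A0
      · obtain ⟨s, hs⟩ := ultrafilter_ne_iff (show u n ≠ v n from hn.2)
        exact ⟨s, fun _ => hs⟩
      · exact ⟨∅, fun h => absurd h hn⟩
    choose S hS using hSex
    obtain ⟨Ha, hHa, hca⟩ := ramsey2 hp (fun n m => S n ∈ u m)
    obtain ⟨Hb, hHb, hcb⟩ := ramsey2 hp (fun n m => S n ∈ v m)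
    set H := Ha ∩ Hb ∩ A0 with hHdef
    have hH : H ∈ p := Filter.inter_mem (Filter.inter_mem hHa hHb) hA0
    have hS' : ∀ n ∈ H, S n ∈ u n ∧ S n ∉ v n := fun n hn => hS n hn.2
    -- a helper for the mixed cases
    have mixed : ∀ n0 ∈ H,
        (∀ m ∈ H, n0 < m → S n0 ∈ u m) → (∀ m ∈ H, n0 < m → S n0 ∉ v m) → False := by
      intro n0 hn0 hmu hmv
      have hP : H ∩ (Set.Iic n0)ᶜ ∈ p :=
        Filter.inter_mem hH
          (Ultrafilter.compl_mem_iff_notMem.mpr (finite_notMem hp.1 (Set.finite_Iic n0)))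
      have h1 : S n0 ∈ ulim p u := by
        refine mem_ulim.mpr (Filter.mem_of_superset hP ?_)
        rintro m ⟨hm1, hm2⟩
        exact hmu m hm1 (by simpa using hm2)
      have h2 : {m | S n0 ∈ v m} ∈ p := mem_ulim.mp (hw ▸ h1)
      obtain ⟨m, hmv', hm1, hm2⟩ :=
        Ultrafilter.nonempty_of_mem (Filter.inter_mem h2 hP)
      exact hmv m hm1 (by simpa using hm2) hmv'
    have mixed' : ∀ n0 ∈ H,
        (∀ m ∈ H, n0 < m → S n0 ∉ u m) → (∀ m ∈ H, n0 < m → S n0 ∈ v m) → False := by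
      intro n0 hn0 hmu hmv
      have hP : H ∩ (Set.Iic n0)ᶜ ∈ p :=
        Filter.inter_mem hH
          (Ultrafilter.compl_mem_iff_notMem.mpr (finite_notMem hp.1 (Set.finite_Iic n0)))
      have h1 : S n0 ∈ ulim p v := by
        refine mem_ulim.mpr (Filter.mem_of_superset hP ?_)
        rintro m ⟨hm1, hm2⟩
        exact hmv m hm1 (by simpa using hm2)
      have h2 : {m | S n0 ∈ u m} ∈ p := mem_ulim.mp (hw ▸ h1)
      obtain ⟨m, hmu', hm1, hm2⟩ :=
        Ultrafilter.nonempty_of_mem (Filter.inter_mem h2 hP)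
      exact hmu m hm1 (by simpa using hm2) hmu'
    obtain ⟨n0, hn0⟩ := Ultrafilter.nonempty_of_mem hH
    rcases hca with haT | haF <;> rcases hcb with hbT | hbF
    · -- both forward memberships: the main case
      refine main_case hp u v H hH (hAuinj.mono ?_) S hS' ?_ hw
      · intro n hn; exact hn.2.1.1
      · intro n hn m hm hnm
        exact ⟨haT n hn.1.1 m hm.1.1 hnm, hbT n hn.1.2 m hm.1.2 hnm⟩
    · exact (mixed n0 hn0 (fun m hm h => haT n0 hn0.1.1 m hm.1.1 h)
        (fun m hm h => hbF n0 hn0.1.2 m hm.1.2 h)).elim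
    · exact (mixed' n0 hn0 (fun m hm h => haF n0 hn0.1.1 m hm.1.1 h)
        (fun m hm h => hbT n0 hn0.1.2 m hm.1.2 h)).elim
    · -- both forward memberships fail: main case with roles swapped
      refine (main_case hp v u H hH (hAvinj.mono ?_) (fun n => (S n)ᶜ) ?_ ?_ hw.symm)
      · intro n hn; exact hn.2.1.2
      · intro n hn
        exact ⟨Ultrafilter.compl_mem_iff_notMem.mpr (hS' n hn).2,
          fun hcon => (Ultrafilter.compl_mem_iff_notMem.mp hcon) (hS' n hn).1⟩
      · intro n hn m hm hnm
        exact ⟨Ultrafilter.compl_mem_iff_notMem.mpr (hbF n hn.1.2 m hm.1.2 hnm),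
          Ultrafilter.compl_mem_iff_notMem.mpr (haF n hn.1.1 m hm.1.1 hnm)⟩
  · -- easy direction
    intro hN
    apply Ultrafilter.coe_injective
    apply Filter.ext
    intro s
    rw [Ultrafilter.mem_coe, Ultrafilter.mem_coe, mem_ulim, mem_ulim]
    constructor
    · intro h
      refine Filter.mem_of_superset (Filter.inter_mem h hN) ?_
      rintro n ⟨h1, h2⟩
      show s ∈ v n
      rw [← show u n = v n from h2]
      exact h1
    · intro h
      refine Filter.mem_of_superset (Filter.inter_mem h hN) ?_
      rintro n ⟨h1, h2⟩
      show s ∈ u n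
      rw [show u n = v n from h2]
      exact h1
end

section
/- Let p be an ultrafilter on ω. Then the family 𝓖^p is closed under ultrafilter limits: if u ∈ 𝓖^p and u_n ∈ 𝓖^p for all n < ω, then u-lim_n u_n ∈ 𝓖^p. -/
/-- `InG p` is the smallest family of ultrafilters on `ℕ` containing all principal ultrafilters
and closed under `p`-limits. -/
inductive InG (p : Ultrafilter ℕ) : Ultrafilter ℕ → Prop
  | principal (n : ℕ) : InG p (pure n)
  | lim (v : ℕ → Ultrafilter ℕ) : (∀ n, InG p (v n)) → InG p (ulim p v)

/-- The family `𝓖^p` is closed under arbitrary ultrafilter limits. -/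
theorem statement14 (p : Ultrafilter ℕ) (u : Ultrafilter ℕ) (hu : InG p u)
    (v : ℕ → Ultrafilter ℕ) (hv : ∀ n, InG p (v n)) :
    InG p (ulim u v) := by
  induction hu with
  | principal n =>
    have : ulim (pure n) v = v n := pure_bind n v
    rw [this]; exact hv n
  | lim w hw ih =>
    have : ulim (ulim p w) v = ulim p (fun n => ulim (w n) v) := bind_assoc p w v
    rw [this]
    exact InG.lim _ ih
end

section
/- For an ultrafilter p on ω, the family 𝓖^p is the smallest family of ultrafilters on ω that: (1) contains all principal ultrafilters; (2) contains p; (3) is closed under Rudin–Keisler images under functions ω → ω; and (4) is closed under Blass–Frolík sums (where the Blass–Frolík sum of ultrafilters on ω, which lives on ω×ω, is identified with an ultrafilter on ω via a fixed bijection ω×ω → ω, equivalently: closed under ultrafilter limits). -/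
lemma mem_bind' {α β : Type*} {u : Ultrafilter α} {v : α → Ultrafilter β} {s : Set β} :
    s ∈ u.bind v ↔ {n | s ∈ v n} ∈ u := Iff.rfl

lemma map_bind' {α β γ : Type*} (f : β → γ) (u : Ultrafilter α) (v : α → Ultrafilter β) :
    Ultrafilter.map f (u.bind v) = u.bind (fun n => Ultrafilter.map f (v n)) := by
  ext s
  simp [Ultrafilter.mem_map, mem_bind']

lemma bind_pure_left {α : Type*} (n : ℕ) (v : ℕ → Ultrafilter α) :
    (Ultrafilter.bind (pure n) v) = v n := by
  ext s
  simp [mem_bind']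

lemma bind_pure_right (u : Ultrafilter ℕ) : u.bind pure = u := by
  ext s
  simp [mem_bind']

lemma bind_assoc {α : Type*} (p : Ultrafilter ℕ) (u : ℕ → Ultrafilter ℕ)
    (w : ℕ → Ultrafilter α) :
    (p.bind u).bind w = p.bind (fun n => (u n).bind w) := by
  ext s
  simp [mem_bind']

/-- `InG p` is closed under `u`-limits for any `u ∈ InG p`. -/
lemma InG.ulim_closed {p : Ultrafilter ℕ} {u : Ultrafilter ℕ} (hu : InG p u)
    (w : ℕ → Ultrafilter ℕ) (hw : ∀ n, InG p (w n)) : InG p (ulim u w) := by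
  induction hu with
  | principal n => rw [ulim, bind_pure_left]; exact hw n
  | lim v hv ih =>
      rw [ulim, ulim, bind_assoc]
      exact InG.lim _ (fun n => ih n)

lemma InG.map {p : Ultrafilter ℕ} (f : ℕ → ℕ) {u : Ultrafilter ℕ} (hu : InG p u) :
    InG p (Ultrafilter.map f u) := by
  induction hu with
  | principal n =>
      have : Ultrafilter.map f (pure n : Ultrafilter ℕ) = pure (f n) := by
        ext s; simp [Ultrafilter.mem_map]
      rw [this]; exact InG.principal _
  | lim v hv ih =>
      rw [ulim, map_bind']
      exact InG.lim _ ih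

lemma map_pair_BFsum (u : Ultrafilter ℕ) (v : ℕ → Ultrafilter ℕ) :
    Ultrafilter.map (fun q : ℕ × ℕ => Nat.pair q.1 q.2) (BFsum u v)
      = ulim u (fun n => Ultrafilter.map (fun m => Nat.pair n m) (v n)) := by
  ext s
  simp only [BFsum, ulim, mem_bind', Ultrafilter.mem_map]; exact Iff.rfl

lemma snd_BFsum {α : Type*} (u : Ultrafilter ℕ) (v : ℕ → Ultrafilter ℕ) :
    Ultrafilter.map (fun k => (Nat.unpair k).2)
      (Ultrafilter.map (fun q : ℕ × ℕ => Nat.pair q.1 q.2) (BFsum u v)) = ulim u v := by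
  ext s
  simp [BFsum, ulim, mem_bind', Ultrafilter.mem_map, Set.preimage, Nat.unpair_pair]

/-- `𝓖^p` is the smallest family of ultrafilters on `ℕ` containing all principal ultrafilters
and `p`, closed under Rudin–Keisler images, and closed under Blass–Frolík sums (transferred to
`ℕ` via the pairing bijection `Nat.pair`). -/
theorem statement15 (p : Ultrafilter ℕ) :
    ((∀ n : ℕ, InG p (pure n)) ∧
      InG p p ∧
      (∀ f : ℕ → ℕ, ∀ u : Ultrafilter ℕ, InG p u → InG p (Ultrafilter.map f u)) ∧
      (∀ u : Ultrafilter ℕ, InG p u → ∀ v : ℕ → Ultrafilter ℕ, (∀ n, InG p (v n)) →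
        InG p (Ultrafilter.map (fun q : ℕ × ℕ => Nat.pair q.1 q.2) (BFsum u v)))) ∧
    ∀ T : Set (Ultrafilter ℕ),
      (∀ n : ℕ, pure n ∈ T) →
      p ∈ T →
      (∀ f : ℕ → ℕ, ∀ u ∈ T, Ultrafilter.map f u ∈ T) →
      (∀ u ∈ T, ∀ v : ℕ → Ultrafilter ℕ, (∀ n, v n ∈ T) →
        Ultrafilter.map (fun q : ℕ × ℕ => Nat.pair q.1 q.2) (BFsum u v) ∈ T) →
      ∀ u : Ultrafilter ℕ, InG p u → u ∈ T := by
  refine ⟨⟨fun n => InG.principal n, ?_, fun f u hu => hu.map f, ?_⟩, ?_⟩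
  · have : p = ulim p pure := (bind_pure_right p).symm
    rw [this]
    exact InG.lim _ (fun n => InG.principal n)
  · intro u hu v hv
    rw [map_pair_BFsum]
    exact hu.ulim_closed _ (fun n => (hv n).map _)
  · intro T hpure hp hmap hsum u hu
    induction hu with
    | principal n => exact hpure n
    | lim v hv ih =>
        have := hmap (fun k => (Nat.unpair k).2) _ (hsum p hp v ih)
        rwa [snd_BFsum (α := ℕ)] at this
end
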